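/- arXiv:2109.11546 — 4 statements merged into one kernel-verified Lean document; each statement's English description precedes it below -/
import Mathlib

section
/- Let T be a tree of order 2k+3 with diameter at most 4, rooted at a center, and let F_T be the forest of nontrivial star components of T minus its root, with p' = ω(F_T) components. Let H be a bipartite graph with parts X, Y where |X| ≥ e(F_T), |Y| ≥ p', and p' ≥ 2. If there exist vertices y_0, y_1, …, y_{p'-1} ∈ Y with deg_H(y_0) ≥ e(F_T) and deg_H(y_i) ≥ e(F_T) − 1 for all 1 ≤ i ≤ p'−1, then H contains a copy of F_T in which all centers of its star components lie in Y. -/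
/-!
A component of `T - r` with `m` vertices has at least `m - 1` edges, so the stars of `F_T` need
at most `e(F_T)` leaves in total, each at least one. Put `y_0` at the centre of one star and the
other `y_i` at the remaining centres, and choose leaves greedily among the `X`-neighbours of the
centres, leaving the star at `y_0` for last: before that, the leaves already used together with the
current star's never exceed `e(F_T) - 1`, because the last star still needs one; and `y_0` has
`e(F_T)` neighbours, enough for all leaves at once.
-/

open Finset SimpleGraph
open scoped Classical

/-- Eccentricity of a vertex in a finite graph. -/
noncomputable def ecc {V : Type*} [Fintype V] (G : SimpleGraph V) (u : V) : ℕ :=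
  univ.sup (fun v => G.dist u v)

/-- The graph obtained from `T` by deleting the vertex `r`. -/
def delRoot {V : Type*} (T : SimpleGraph V) (r : V) : SimpleGraph {w : V // w ≠ r} :=
  T.induce {w : V | w ≠ r}

/-- The number of edges of `T - r`, i.e. `e(F_T)` (all edges of `T - r` lie in
nontrivial star components). -/
noncomputable def eFT {V : Type*} [Fintype V] (T : SimpleGraph V) (r : V) : ℕ :=
  (delRoot T r).edgeFinset.card

/-- A component of `T - r` is nontrivial if it contains an edge. -/
def isNontriv {V : Type*} (T : SimpleGraph V) (r : V)
    (c : (delRoot T r).ConnectedComponent) : Prop :=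
  ∃ a b, (delRoot T r).Adj a b ∧ (delRoot T r).connectedComponentMk a = c

/-- `p'`: the number of nontrivial (star) components of `T - r`. -/
noncomputable def numNontriv {V : Type*} (T : SimpleGraph V) (r : V) : ℕ :=
  Nat.card {c : (delRoot T r).ConnectedComponent // isNontriv T r c}

namespace SimpleGraph

variable {V : Type*} [Fintype V] {G : SimpleGraph V}

theorem ConnectedComponent.one_lt_card_supp_of_adj {c : G.ConnectedComponent} {a b : V}
    (hab : G.Adj a b) (ha : G.connectedComponentMk a = c) : 1 < Nat.card c.supp := by
  have hb : b ∈ c.supp := (ConnectedComponent.eq.mpr hab.reachable).symm.trans ha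
  exact Finite.one_lt_card_iff_nontrivial.mpr ⟨⟨a, ha⟩, ⟨b, hb⟩, fun h => hab.ne congr($h.1)⟩

variable [DecidableRel G.Adj]

theorem ConnectedComponent.card_supp_le_card_edgeFinset_inter_add_one (c : G.ConnectedComponent) :
    Nat.card c.supp ≤ #(G.edgeFinset ∩ c.supp.toFinset.sym2) + 1 := by
  rw [← map_edgeFinset_induce, card_map, edgeFinset_card, ← Nat.card_eq_fintype_card]
  exact c.connected_toSimpleGraph.card_vert_le_card_edgeSet_add_one

theorem ConnectedComponent.pairwiseDisjoint_edgeFinset_inter_sym2 :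
    (Set.univ : Set G.ConnectedComponent).PairwiseDisjoint
      (fun c => G.edgeFinset ∩ c.supp.toFinset.sym2) := by
  intro c _ c' _ hne
  refine Finset.disjoint_left.mpr fun e he he' => hne ?_
  induction e using Sym2.ind with
  | h u v =>
    simp only [mem_inter, mem_sym2_iff, Sym2.mem_iff, Set.mem_toFinset,
      ConnectedComponent.mem_supp_iff] at he he'
    exact (he.2 u (Or.inl rfl)).symm.trans (he'.2 u (Or.inl rfl))

theorem sum_card_supp_sub_one_le_card_edgeFinset [Fintype G.ConnectedComponent] :
    ∑ c : G.ConnectedComponent, (Nat.card c.supp - 1) ≤ #G.edgeFinset :=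
  calc ∑ c : G.ConnectedComponent, (Nat.card c.supp - 1)
      ≤ ∑ c : G.ConnectedComponent, #(G.edgeFinset ∩ c.supp.toFinset.sym2) :=
        sum_le_sum fun c _ => Nat.sub_le_of_le_add c.card_supp_le_card_edgeFinset_inter_add_one
    _ = #(univ.biUnion fun c : G.ConnectedComponent => G.edgeFinset ∩ c.supp.toFinset.sym2) :=
        (card_biUnion
          (by simpa using ConnectedComponent.pairwiseDisjoint_edgeFinset_inter_sym2)).symm
    _ ≤ #G.edgeFinset := card_le_card (biUnion_subset.mpr fun _ _ => inter_subset_left)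

theorem card_neighborFinset_inr {α β : Type*} [Fintype α] [Fintype β]
    {H : SimpleGraph (α ⊕ β)} (hbip : ∀ x y, H.Adj x y → x.isLeft ≠ y.isLeft) (b : β) :
    #(H.neighborFinset (.inr b)) = #{a | H.Adj (.inr b) (.inl a)} := by
  suffices H.neighborFinset (.inr b) = ({a | H.Adj (.inr b) (.inl a)} : Finset α).map .inl by
    rw [this, card_map]
  ext (a | b')
  · simp
  · simpa using mt (hbip _ _) (by simp)

end SimpleGraph

namespace Finset

open Function

variable {ι α : Type*} [DecidableEq α] {N : ι → Finset α} {d : ι → ℕ}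

theorem exists_subset_card_eq_disjoint {U S : Finset α} {m : ℕ} (h : #U + m ≤ #S) :
    ∃ A ⊆ S, #A = m ∧ Disjoint A U := by
  obtain ⟨A, hAS, hA⟩ := exists_subset_card_eq (s := S \ U) (n := m) (by
    have := le_card_sdiff U S; omega)
  exact ⟨A, hAS.trans sdiff_subset, hA, disjoint_of_subset_left hAS sdiff_disjoint⟩

theorem exists_pairwiseDisjoint_subsets_insert {s : Finset ι} {a : ι} (ha : a ∉ s)
    {L : ι → Finset α} (hL : ∀ i ∈ s, L i ⊆ N i ∧ #(L i) = d i)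
    (hdisj : (s : Set ι).PairwiseDisjoint L)
    (h : ∑ j ∈ insert a s, d j ≤ #(N a)) :
    ∃ L' : ι → Finset α, (∀ i ∈ insert a s, L' i ⊆ N i ∧ #(L' i) = d i) ∧
      (↑(insert a s) : Set ι).PairwiseDisjoint L' := by
  have hU : #(s.biUnion L) + d a ≤ #(N a) := by
    calc #(s.biUnion L) + d a ≤ ∑ j ∈ s, d j + d a := by
          rw [card_biUnion hdisj, sum_congr rfl fun i hi => (hL i hi).2]
      _ = ∑ j ∈ insert a s, d j := by rw [sum_insert ha, add_comm]
      _ ≤ #(N a) := h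
  obtain ⟨A, hAN, hA, hAU⟩ := exists_subset_card_eq_disjoint hU
  refine ⟨update L a A, ?_, ?_⟩
  · intro i hi
    rcases eq_or_ne i a with rfl | hia
    · simpa using ⟨hAN, hA⟩
    · simpa [hia] using hL i ((mem_insert.mp hi).resolve_left hia)
  · have hne : ∀ i ∈ s, i ≠ a := fun i hi hia => ha (hia ▸ hi)
    rw [coe_insert, Set.pairwiseDisjoint_insert_of_notMem (by exact_mod_cast ha)]
    refine ⟨fun i hi j hj hij => ?_, fun j hj => ?_⟩
    · simpa [onFun, hne i hi, hne j hj] using hdisj hi hj hij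
    · simpa [hne j hj] using hAU.mono_right (subset_biUnion_of_mem L hj)

theorem exists_pairwiseDisjoint_subsets_of_sum_le (s : Finset ι)
    (h : ∀ i ∈ s, ∑ j ∈ s, d j ≤ #(N i)) :
    ∃ L : ι → Finset α, (∀ i ∈ s, L i ⊆ N i ∧ #(L i) = d i) ∧ (s : Set ι).PairwiseDisjoint L := by
  induction s using Finset.induction_on with
  | empty => exact ⟨fun _ => ∅, by simp, by simp⟩
  | insert a s ha ih =>
    have hsum : ∑ j ∈ s, d j ≤ ∑ j ∈ insert a s, d j := sum_le_sum_of_subset (subset_insert a s)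
    obtain ⟨L, hL, hdisj⟩ := ih fun i hi => hsum.trans (h i (mem_insert_of_mem hi))
    exact exists_pairwiseDisjoint_subsets_insert ha hL hdisj (h a (mem_insert_self a s))

theorem exists_pairwiseDisjoint_subsets_of_le_card [Fintype ι] (i₀ : ι) (hd : 1 ≤ d i₀) {E : ℕ}
    (hE : ∑ i, d i ≤ E) (h₀ : E ≤ #(N i₀)) (h : ∀ i ≠ i₀, E - 1 ≤ #(N i)) :
    ∃ L : ι → Finset α, (∀ i, L i ⊆ N i ∧ #(L i) = d i) ∧ Pairwise (Disjoint on L) := by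
  have hrest : ∑ j ∈ univ.erase i₀, d j + d i₀ = ∑ j, d j := sum_erase_add _ _ (mem_univ i₀)
  obtain ⟨L, hL, hdisj⟩ :=
    exists_pairwiseDisjoint_subsets_of_sum_le (N := N) (d := d) (univ.erase i₀) fun i hi => by
      have := h i (ne_of_mem_erase hi); omega
  obtain ⟨L', hL', hdisj'⟩ :=
    exists_pairwiseDisjoint_subsets_insert (notMem_erase i₀ univ) hL hdisj (by
      rw [insert_erase (mem_univ i₀)]; omega)
  rw [insert_erase (mem_univ i₀)] at hL' hdisj'
  rw [coe_univ, Set.PairwiseDisjoint, Set.pairwise_univ] at hdisj'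
  exact ⟨L', fun i => hL' i (mem_univ i), hdisj'⟩

end Finset

theorem stmt_0 {V α β : Type*} [Fintype V] [Fintype α] [Fintype β]
    (T : SimpleGraph V)
    (r : V)
    (hp' : 2 ≤ numNontriv T r)
    -- `H` is a bipartite graph with parts `X = α` and `Y = β`
    (H : SimpleGraph (α ⊕ β))
    (hbip : ∀ x y, H.Adj x y → x.isLeft ≠ y.isLeft)
    -- the vertices `y_0, y_1, …, y_{p'-1} ∈ Y` with large degrees
    (y : Fin (numNontriv T r) → β) (hyinj : Function.Injective y)
    (hy0 : eFT T r ≤ (H.neighborFinset (Sum.inr (y ⟨0, by omega⟩))).card)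
    (hyi : ∀ i : Fin (numNontriv T r), (i : ℕ) ≠ 0 →
      eFT T r - 1 ≤ (H.neighborFinset (Sum.inr (y i))).card) :
    -- `H` contains a copy of `F_T` with all centers of its star components in `Y`:
    -- an injective choice of a center `ctr c ∈ Y` and of pairwise disjoint leaf sets
    -- `lvs c ⊆ X` of the right sizes, completely joined to the corresponding centers.
    ∃ (ctr : {c : (delRoot T r).ConnectedComponent // isNontriv T r c} → β)
      (lvs : {c : (delRoot T r).ConnectedComponent // isNontriv T r c} → Finset α),
      Function.Injective ctr ∧
      (∀ c, (lvs c).card = Nat.card c.1.supp - 1) ∧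
      (∀ c c', c ≠ c' → Disjoint (lvs c) (lvs c')) ∧
      (∀ c, ∀ a ∈ lvs c, H.Adj (Sum.inr (ctr c)) (Sum.inl a)) := by
  let e := Finite.equivFin {c // isNontriv T r c}
  let c₀ := e.symm ⟨0, Nat.zero_lt_two.trans_le hp'⟩
  have hstars : ∑ c : {c // isNontriv T r c}, (Nat.card c.1.supp - 1) ≤ eFT T r :=
    calc _ = ∑ c ∈ univ.filter (isNontriv T r), (Nat.card c.supp - 1) :=
          (sum_subtype _ (by simp) _).symm
      _ ≤ ∑ c : (delRoot T r).ConnectedComponent, (Nat.card c.supp - 1) :=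
          sum_le_univ_sum_of_nonneg fun _ => Nat.zero_le _
      _ ≤ eFT T r := sum_card_supp_sub_one_le_card_edgeFinset
  have hc₀ : 1 ≤ Nat.card c₀.1.supp - 1 := by
    obtain ⟨a, b, hab, ha⟩ := c₀.2
    have := ConnectedComponent.one_lt_card_supp_of_adj hab ha
    omega
  obtain ⟨lvs, hlvs, hdisj⟩ := exists_pairwiseDisjoint_subsets_of_le_card
    (N := fun c => {a | H.Adj (.inr (y (e c))) (.inl a)}) c₀ hc₀ hstars
    (by rw [← card_neighborFinset_inr hbip, e.apply_symm_apply]; exact hy0)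
    fun c hc => by
      have : (e c : ℕ) ≠ 0 := fun h => hc (e.symm_apply_eq.mpr (Fin.ext h.symm)).symm
      rw [← card_neighborFinset_inr hbip]
      exact hyi (e c) this
  exact ⟨y ∘ e, lvs, hyinj.comp e.injective, fun c => (hlvs c).2, hdisj,
    fun c a ha => (mem_filter.mp ((hlvs c).1 ha)).2⟩
end

section
/- The tree S_{2,…,2} obtained from the star K_{1,k+1} by subdividing each of its k+1 edges exactly once is the unique tree of order 2k+3 and diameter at most 4 for which p' = k+1, where p' is the number of nontrivial star components obtained by deleting the center. -/
open Finset SimpleGraph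
open scoped Classical

/-- The spider `S_{2,…,2}`: the star `K_{1,k+1}` with every edge subdivided once.
`none` is the center, `some (i, 0)` the middle vertex of the `i`-th leg, and
`some (i, 1)` its leaf. -/
def spider (k : ℕ) : SimpleGraph (Option (Fin (k + 1) × Fin 2)) :=
  SimpleGraph.fromRel (fun a b =>
    (a = none ∧ ∃ i, b = some (i, 0)) ∨ (∃ i, a = some (i, 0) ∧ b = some (i, 1)))

private lemma liftReach {V : Type*} (T : SimpleGraph V) (r : V) :
    ∀ {v w : V} (p : T.Walk v w), (∀ x ∈ p.support, x ≠ r) →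
      ∀ (hv : v ≠ r) (hw : w ≠ r), (delRoot T r).Reachable ⟨v, hv⟩ ⟨w, hw⟩ := by
  intro v w p
  induction p with
  | nil => intro _ hv hw; exact Reachable.refl _
  | cons h q ih =>
    rename_i u x y
    intro hs hv hw
    have hx : x ≠ r := hs x (by simp)
    have hadj : (delRoot T r).Adj ⟨u, hv⟩ ⟨x, hx⟩ := h
    exact hadj.reachable.trans (ih (fun z hz => hs z (by simp [hz])) hx hw)

theorem stmt_9 {V : Type*} [Fintype V] (k : ℕ) (T : SimpleGraph V) (hT : T.IsTree)
    (hcard : Fintype.card V = 2 * k + 3) (hdiam : ∀ v w : V, T.dist v w ≤ 4)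
    (r : V) (hr : ∀ w, ecc T r ≤ ecc T w)
    (hmax : ∀ w, ecc T w = ecc T r →
      Nat.card ((delRoot T w).ConnectedComponent) ≤
        Nat.card ((delRoot T r).ConnectedComponent))
    (hp' : numNontriv T r = k + 1) :
    Nonempty (T ≃g spider k) := by
    classical
  set V' := {w : V // w ≠ r} with hV'
  set G := delRoot T r with hGdef
  set mkc := G.connectedComponentMk with hmkc
  -- cardinality of V'
  have hcard' : Fintype.card V' = 2 * k + 2 := by
    have : Fintype.card V' = Fintype.card V - Fintype.card {w : V // w = r} :=
      Fintype.card_subtype_compl _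
    rw [this, Fintype.card_subtype_eq, hcard]
    omega
  -- (A) distinct neighbors of r lie in distinct components
  have uniqNbr : ∀ a b : V', T.Adj r ↑a → T.Adj r ↑b → mkc a = mkc b → a = b := by
    intro a b ha hb hcomp
    by_contra hab
    obtain ⟨p⟩ : G.Reachable a b := ConnectedComponent.exact hcomp
    let f : G →g T := ⟨Subtype.val, fun h => h⟩
    let W : T.Walk ↑a ↑b := p.map f
    have hrW : r ∉ W.support := by
      rw [Walk.support_map]
      rintro hmem
      obtain ⟨x, -, hx⟩ := List.mem_map.mp hmem
      exact x.2 hx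
    have hbr := (isAcyclic_iff_forall_adj_isBridge.mp hT.IsAcyclic) ha
    rw [isBridge_iff_adj_and_forall_walk_mem_edges] at hbr
    have hmem := hbr (Walk.cons hb W.reverse)
    rw [Walk.edges_cons, List.mem_cons] at hmem
    rcases hmem with h1 | h2
    · rw [Sym2.eq_iff] at h1
      rcases h1 with ⟨-, h⟩ | ⟨-, h⟩
      · exact hab (Subtype.ext h)
      · exact a.2 h
    · have := Walk.fst_mem_support_of_mem_edges _ h2
      rw [Walk.support_reverse] at this
      exact hrW (List.mem_reverse.mp this)
  -- (B) every component contains a neighbor of r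
  have exNbr : ∀ v : V', ∃ a : V', T.Adj r ↑a ∧ mkc a = mkc v := by
    intro v
    obtain ⟨p0⟩ : T.Reachable r ↑v := hT.isConnected.preconnected r ↑v
    have hp : p0.bypass.IsPath := Walk.bypass_isPath p0
    obtain ⟨x, hadj, q, hpq⟩ := Walk.exists_eq_cons_of_ne (fun h => v.2 h.symm) p0.bypass
    rw [hpq, Walk.cons_isPath_iff] at hp
    have hx : x ≠ r := fun h => hp.2 (h ▸ q.start_mem_support)
    have hreach : G.Reachable ⟨x, hx⟩ ⟨↑v, v.2⟩ :=
      liftReach T r q (fun z hz h => hp.2 (h ▸ hz)) hx v.2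
    exact ⟨⟨x, hx⟩, hadj, ConnectedComponent.sound hreach⟩
  -- fibers
  set F : G.ConnectedComponent → Finset V' :=
    fun c => univ.filter (fun v => mkc v = c) with hF
  have hmemF : ∀ (x : V') (c), x ∈ F c ↔ mkc x = c := by
    intro x c; simp [hF]
  have hsum : ∑ c : G.ConnectedComponent, (F c).card = 2 * k + 2 := by
    rw [← hcard', ← Finset.card_univ,
      Finset.card_eq_sum_card_fiberwise (f := mkc) (fun x _ => Finset.mem_univ _)]
  have hF1 : ∀ c, 1 ≤ (F c).card := by
    intro c
    obtain ⟨x, hx⟩ := c.exists_rep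
    exact Finset.card_pos.mpr ⟨x, (hmemF x c).mpr hx⟩
  have hF2 : ∀ c, isNontriv T r c → 2 ≤ (F c).card := by
    intro c hc
    obtain ⟨a, b, hab, hmk⟩ := hc
    have hb : mkc b = c := by
      rw [← hmk]; exact (ConnectedComponent.sound hab.symm.reachable)
    exact Finset.one_lt_card.mpr ⟨a, (hmemF a c).mpr hmk, b, (hmemF b c).mpr hb, hab.ne⟩
  have hcnt : (univ.filter (isNontriv T r)).card = k + 1 := by
    rw [← hp', numNontriv, Nat.card_eq_fintype_card, Fintype.card_subtype]
  have hsplit := Finset.sum_filter_add_sum_filter_not univ (isNontriv T r)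
    (fun c => (F c).card)
  have h2N : 2 * (k + 1) ≤ ∑ c ∈ univ.filter (isNontriv T r), (F c).card := by
    calc 2 * (k + 1) = (univ.filter (isNontriv T r)).card * 2 := by rw [hcnt]; ring
    _ = ∑ _c ∈ univ.filter (isNontriv T r), 2 := by rw [Finset.sum_const, smul_eq_mul]
    _ ≤ _ := Finset.sum_le_sum (fun c hc => hF2 c (Finset.mem_filter.mp hc).2)
  have hTsum : (univ.filter (fun c => ¬ isNontriv T r c)).card ≤
      ∑ c ∈ univ.filter (fun c => ¬ isNontriv T r c), (F c).card := by
    rw [Finset.card_eq_sum_ones]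
    exact Finset.sum_le_sum (fun c _ => hF1 c)
  have hsplit' : (∑ c ∈ univ.filter (isNontriv T r), (F c).card) +
      (∑ c ∈ univ.filter (fun c => ¬ isNontriv T r c), (F c).card) = 2 * k + 2 := by
    rw [← hsum]; exact hsplit
  have hTriv0 : (univ.filter (fun c => ¬ isNontriv T r c)).card = 0 := by omega
  have hAll : ∀ c, isNontriv T r c := by
    intro c
    by_contra hc
    have : c ∈ univ.filter (fun c => ¬ isNontriv T r c) := by simp [hc]
    rw [Finset.card_eq_zero] at hTriv0
    simp [hTriv0] at this
  have hNcomp : Fintype.card G.ConnectedComponent = k + 1 := by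
    rw [← Finset.card_univ, ← hcnt]
    congr 1
    ext c
    simp [hAll c]
  have hFeq2 : ∀ c, (F c).card = 2 := by
    intro c
    by_contra hne
    have h3 : 2 < (F c).card := lt_of_le_of_ne (hF2 c (hAll c)) (Ne.symm hne)
    have hlt : ∑ _c : G.ConnectedComponent, 2 < ∑ c : G.ConnectedComponent, (F c).card :=
      Finset.sum_lt_sum (fun i _ => hF2 i (hAll i)) ⟨c, Finset.mem_univ c, h3⟩
    rw [hsum, Finset.sum_const, smul_eq_mul, Finset.card_univ, hNcomp] at hlt
    omega
  -- choose A
  have hAex : ∀ c, ∃ a : V', T.Adj r ↑a ∧ mkc a = c := by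
    intro c; obtain ⟨v, rfl⟩ := c.exists_rep; exact exNbr v
  choose A hAadj hAmk using hAex
  -- choose B
  have hBex : ∀ c, ∃ b : V', b ≠ A c ∧ F c = {A c, b} := by
    intro c
    obtain ⟨x, y, hxy, hFxy⟩ := Finset.card_eq_two.mp (hFeq2 c)
    have hAmem : A c ∈ F c := (hmemF _ _).mpr (hAmk c)
    rw [hFxy, Finset.mem_insert, Finset.mem_singleton] at hAmem
    rcases hAmem with rfl | rfl
    · exact ⟨y, hxy.symm, hFxy⟩
    · exact ⟨x, hxy, by rw [hFxy, Finset.pair_comm]⟩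
  choose B hBne hFpair using hBex
  have hmk_iff : ∀ (x : V') (c), mkc x = c ↔ x = A c ∨ x = B c := by
    intro x c
    rw [← hmemF, hFpair, Finset.mem_insert, Finset.mem_singleton]
  have hBmk : ∀ c, mkc (B c) = c := fun c => (hmk_iff _ _).mpr (Or.inr rfl)
  have hABadj : ∀ c, G.Adj (A c) (B c) := by
    intro c
    obtain ⟨a, b, hab, hmk⟩ := hAll c
    have hb : mkc b = c := by
      rw [← hmk]; exact (ConnectedComponent.sound hab.symm.reachable)
    rcases (hmk_iff a c).mp hmk with rfl | rfl <;>
      rcases (hmk_iff b c).mp hb with rfl | rfl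
    · exact absurd rfl hab.ne
    · exact hab
    · exact hab.symm
    · exact absurd rfl hab.ne
  have hNbrA : ∀ x : V', T.Adj r ↑x → x = A (mkc x) := by
    intro x hx
    exact uniqNbr x (A (mkc x)) hx (hAadj _) ((hAmk (mkc x)).symm)
  -- the equivalence with Fin (k+1)
  let e : G.ConnectedComponent ≃ Fin (k + 1) := Fintype.equivFinOfCardEq hNcomp
  -- the bijection
  let f : V → Option (Fin (k + 1) × Fin 2) := fun v =>
    if h : v = r then none
    else if (⟨v, h⟩ : V') = A (mkc ⟨v, h⟩) then some (e (mkc ⟨v, h⟩), 0)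
    else some (e (mkc ⟨v, h⟩), 1)
  let g : Option (Fin (k + 1) × Fin 2) → V := fun x =>
    match x with
    | none => r
    | some (i, j) => if j = 0 then ↑(A (e.symm i)) else ↑(B (e.symm i))
  have hfr : f r = none := dif_pos rfl
  have hfA : ∀ c, f ↑(A c) = some (e c, 0) := by
    intro c
    show (if h : (↑(A c) : V) = r then none else _) = _
    rw [dif_neg (A c).2]
    simp only [Subtype.coe_eta, hAmk c, eq_self_iff_true, if_true]
  have hfB : ∀ c, f ↑(B c) = some (e c, 1) := by
    intro c
    show (if h : (↑(B c) : V) = r then none else _) = _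
    rw [dif_neg (B c).2]
    simp only [Subtype.coe_eta, hBmk c, if_neg (hBne c)]
  have hleft : Function.LeftInverse g f := by
    intro v
    by_cases h : v = r
    · subst h; rw [hfr]
    · have hv : (⟨v, h⟩ : V') = A (mkc ⟨v, h⟩) ∨ (⟨v, h⟩ : V') = B (mkc ⟨v, h⟩) :=
        (hmk_iff ⟨v, h⟩ _).mp rfl
      rcases hv with hv | hv
      · have : v = ↑(A (mkc ⟨v, h⟩)) := congrArg Subtype.val hv
        rw [this, hfA]
        show (if (0 : Fin 2) = 0 then _ else _) = _
        rw [if_pos rfl, Equiv.symm_apply_apply]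
      · have : v = ↑(B (mkc ⟨v, h⟩)) := congrArg Subtype.val hv
        rw [this, hfB]
        show (if (1 : Fin 2) = 0 then _ else _) = _
        rw [if_neg (by decide), Equiv.symm_apply_apply]
  have hright : Function.RightInverse g f := by
    rintro (_ | ⟨i, j⟩)
    · exact hfr
    · fin_cases j
      · show f (if (0 : Fin 2) = 0 then _ else _) = _
        rw [if_pos rfl, hfA, Equiv.apply_symm_apply]
        rfl
      · show f (if (1 : Fin 2) = 0 then _ else _) = _
        rw [if_neg (by decide), hfB, Equiv.apply_symm_apply]
        rfl
  -- spider adjacency helpers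
  have hsp1 : ∀ i, (spider k).Adj none (some (i, 0)) := by
    intro i
    rw [spider, fromRel_adj]
    exact ⟨by simp, Or.inl (Or.inl ⟨rfl, i, rfl⟩)⟩
  have hsp2 : ∀ i, (spider k).Adj (some (i, 0)) (some (i, 1)) := by
    intro i
    rw [spider, fromRel_adj]
    exact ⟨by simp, Or.inl (Or.inr ⟨i, rfl, rfl⟩)⟩
  -- forward adjacency
  have hfwd : ∀ v w : V, T.Adj v w → (spider k).Adj (f v) (f w) := by
    have key : ∀ w : V, T.Adj r w → (spider k).Adj (f r) (f w) := by
      intro w hvw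
      have hw : w ≠ r := fun h => T.irrefl (h ▸ hvw)
      have hwA : (⟨w, hw⟩ : V') = A (mkc ⟨w, hw⟩) := hNbrA ⟨w, hw⟩ hvw
      have : w = ↑(A (mkc ⟨w, hw⟩)) := congrArg Subtype.val hwA
      rw [hfr, this, hfA]
      exact hsp1 _
    intro v w hvw
    by_cases hv : v = r
    · subst hv; exact key w hvw
    · by_cases hw : w = r
      · subst hw; exact (key v hvw.symm).symm
      · have hGvw : G.Adj ⟨v, hv⟩ ⟨w, hw⟩ := hvw
        have hcw : mkc ⟨w, hw⟩ = mkc ⟨v, hv⟩ :=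
          ConnectedComponent.sound hGvw.symm.reachable
        set c := mkc ⟨v, hv⟩ with hc
        have hne : (⟨v, hv⟩ : V') ≠ ⟨w, hw⟩ := fun h => hGvw.ne h
        rcases (hmk_iff ⟨v, hv⟩ c).mp rfl with h1 | h1 <;>
          rcases (hmk_iff ⟨w, hw⟩ c).mp hcw with h2 | h2
        · exact absurd (h1.trans h2.symm) hne
        · have e1 : v = ↑(A c) := congrArg Subtype.val h1
          have e2 : w = ↑(B c) := congrArg Subtype.val h2
          rw [e1, e2, hfA, hfB]; exact hsp2 _
        · have e1 : v = ↑(B c) := congrArg Subtype.val h1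
          have e2 : w = ↑(A c) := congrArg Subtype.val h2
          rw [e1, e2, hfA, hfB]; exact (hsp2 _).symm
        · exact absurd (h1.trans h2.symm) hne
  -- backward adjacency
  have hbwd : ∀ x y, (spider k).Adj x y → T.Adj (g x) (g y) := by
    have key : ∀ x y, ((x = none ∧ ∃ i, y = some (i, 0)) ∨
        (∃ i, x = some (i, 0) ∧ y = some (i, 1))) → T.Adj (g x) (g y) := by
      rintro x y (⟨rfl, i, rfl⟩ | ⟨i, rfl, rfl⟩)
      · show T.Adj r (if (0 : Fin 2) = 0 then _ else _)
        rw [if_pos rfl]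
        exact hAadj _
      · show T.Adj (if (0 : Fin 2) = 0 then _ else _) (if (1 : Fin 2) = 0 then _ else _)
        rw [if_pos rfl, if_neg (by decide)]
        exact hABadj (e.symm i)
    intro x y hxy
    rw [spider, fromRel_adj] at hxy
    rcases hxy.2 with h | h
    · exact key x y h
    · exact (key y x h).symm
  refine ⟨⟨⟨f, g, hleft, hright⟩, ?_⟩⟩
  intro v w
  simp only [Equiv.coe_fn_mk]
  exact ⟨fun h => by have := hbwd _ _ h; rwa [hleft, hleft] at this, hfwd v w⟩
end

section
/- Let k ≥ 1 and let G be a graph of order n. Suppose u ∈ V(G) satisfies Σ_{x ∈ N¹(u)} d_{L_u}(x) − (k−2)d_G(u) − k(n−k) ≥ 0, where L_u is as defined. Then d_G(u) ≥ k, and if d_G(u) = k then every vertex x ∈ N¹(u) satisfies d_{L_u}(x) = n−2, so that G contains S_{n,k} as a subgraph. -/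
open Finset SimpleGraph
open scoped Classical

/-- The set of vertices at distance exactly `d` from `u`. -/
noncomputable def Nd {V : Type*} [Fintype V] (G : SimpleGraph V) (u : V) (d : ℕ) : Finset V :=
  univ.filter (fun v => G.dist u v = d)

/-- The graph `L_u` with edge set `E(N¹(u)) ∪ E(N¹(u), N²(u))`
(as a graph on `V`; vertices outside `N¹(u) ∪ N²(u)` are isolated). -/
def Lu {V : Type*} (G : SimpleGraph V) (u : V) : SimpleGraph V :=
  SimpleGraph.fromRel (fun a b =>
    G.Adj a b ∧ G.dist u a = 1 ∧ (G.dist u b = 1 ∨ G.dist u b = 2))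

/-- Degree of `x` in `L_u`. -/
noncomputable def dLu {V : Type*} [Fintype V] (G : SimpleGraph V) (u : V) (x : V) : ℕ :=
  ((Lu G u).neighborFinset x).card

/-- `S_{n,k} = K_k ∨ (n-k)·K_1`. -/
def Snk (n k : ℕ) : SimpleGraph (Fin n) :=
  SimpleGraph.fromRel (fun i _ => (i : ℕ) < k)

/-- `G` contains a copy of `H`. -/
def Contains {α β : Type*} (G : SimpleGraph α) (H : SimpleGraph β) : Prop :=
  ∃ f : H →g G, Function.Injective f

lemma Nd_one_eq {V : Type*} [Fintype V] (G : SimpleGraph V) (u : V) :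
    Nd G u 1 = G.neighborFinset u := by
  ext v
  simp [Nd, SimpleGraph.dist_eq_one_iff_adj]

lemma Lu_nbr_subset {V : Type*} [Fintype V] (G : SimpleGraph V) (u x : V) :
    (Lu G u).neighborFinset x ⊆ univ \ {u, x} := by
  intro y hy
  rw [SimpleGraph.mem_neighborFinset] at hy
  obtain ⟨hne, h | h⟩ := hy
  · simp only [mem_sdiff, mem_univ, mem_insert, mem_singleton, true_and]
    push_neg
    refine ⟨?_, fun h' => hne h'.symm⟩
    rintro rfl
    rcases h.2.2 with h2 | h2 <;> rw [SimpleGraph.dist_self] at h2 <;> omega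
  · simp only [mem_sdiff, mem_univ, mem_insert, mem_singleton, true_and]
    push_neg
    refine ⟨?_, fun h' => hne h'.symm⟩
    rintro rfl
    have h2 := h.2.1
    rw [SimpleGraph.dist_self] at h2
    omega

lemma Lu_adj_G_adj {V : Type*} (G : SimpleGraph V) (u x y : V) (h : (Lu G u).Adj x y) :
    G.Adj x y := by
  obtain ⟨hne, h | h⟩ := h
  · exact h.1
  · exact h.1.symm

theorem stmt_13 {V : Type*} [Fintype V] (G : SimpleGraph V) (u : V)
    (k n : ℕ) (hk : 1 ≤ k) (hkn : k < n) (hn : n = Fintype.card V)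
    (hBu : 0 ≤ (∑ x ∈ Nd G u 1, (dLu G u x : ℝ)) - ((k : ℝ) - 2) * (G.degree u : ℝ) -
      (k : ℝ) * ((n : ℝ) - (k : ℝ))) :
    k ≤ G.degree u ∧
      (G.degree u = k →
        (∀ x ∈ Nd G u 1, dLu G u x = n - 2) ∧ Contains G (Snk n k)) := by
  have hn2 : 2 ≤ n := by omega
  have hcard : (Nd G u 1).card = G.degree u := by
    rw [Nd_one_eq, SimpleGraph.card_neighborFinset_eq_degree]
  have hdLu_le : ∀ x ∈ Nd G u 1, dLu G u x ≤ n - 2 := by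
    intro x hx
    have hux : u ≠ x := by
      rintro rfl
      simp [Nd, SimpleGraph.dist_self] at hx
    have hsub := Lu_nbr_subset G u x
    have hc : (univ \ ({u, x} : Finset V)).card = n - 2 := by
      rw [Finset.card_sdiff_of_subset (by simp)]
      rw [Finset.card_insert_of_notMem (by simpa using hux), Finset.card_singleton,
        Finset.card_univ, ← hn]
    calc dLu G u x ≤ (univ \ ({u, x} : Finset V)).card := Finset.card_le_card hsub
      _ = n - 2 := hc
  have hle : ∀ x ∈ Nd G u 1, (dLu G u x : ℝ) ≤ (n : ℝ) - 2 := by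
    intro x hx
    have h1 := hdLu_le x hx
    have : (dLu G u x : ℝ) ≤ ((n - 2 : ℕ) : ℝ) := Nat.cast_le.mpr h1
    rwa [Nat.cast_sub hn2, Nat.cast_ofNat] at this
  have hsum : (∑ x ∈ Nd G u 1, (dLu G u x : ℝ)) ≤ (G.degree u : ℝ) * ((n : ℝ) - 2) := by
    calc (∑ x ∈ Nd G u 1, (dLu G u x : ℝ)) ≤ ∑ _x ∈ Nd G u 1, ((n : ℝ) - 2) :=
          Finset.sum_le_sum hle
      _ = (G.degree u : ℝ) * ((n : ℝ) - 2) := by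
          rw [Finset.sum_const, hcard, nsmul_eq_mul]
  have hdegk : k ≤ G.degree u := by
    by_contra h
    push_neg at h
    have h1 : (G.degree u : ℝ) < (k : ℝ) := by exact_mod_cast h
    have h2 : (k : ℝ) < (n : ℝ) := by exact_mod_cast hkn
    nlinarith [mul_pos (sub_pos.mpr h1) (sub_pos.mpr h2)]
  refine ⟨hdegk, fun hdeg => ?_⟩
  -- degree u = k
  have hscard : (Nd G u 1).card = k := by rw [hcard, hdeg]
  have hsumeq : (∑ x ∈ Nd G u 1, ((n : ℝ) - 2 - (dLu G u x : ℝ))) = 0 := by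
    have hlow : (k : ℝ) * ((n : ℝ) - 2) ≤ ∑ x ∈ Nd G u 1, (dLu G u x : ℝ) := by
      rw [hdeg] at hBu
      nlinarith
    have hup : (∑ x ∈ Nd G u 1, (dLu G u x : ℝ)) ≤ (k : ℝ) * ((n : ℝ) - 2) := by
      rw [hdeg] at hsum; exact hsum
    rw [Finset.sum_sub_distrib, Finset.sum_const, hscard, nsmul_eq_mul]
    linarith
  have heach : ∀ x ∈ Nd G u 1, dLu G u x = n - 2 := by
    intro x hx
    have h0 := (Finset.sum_eq_zero_iff_of_nonneg
      (fun y hy => by linarith [hle y hy])).mp hsumeq x hx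
    have : (dLu G u x : ℝ) = ((n - 2 : ℕ) : ℝ) := by
      rw [Nat.cast_sub hn2, Nat.cast_ofNat]; linarith
    exact_mod_cast this
  refine ⟨heach, ?_⟩
  -- every x in Nd G u 1 is adjacent to everything else
  have hdom : ∀ x ∈ Nd G u 1, ∀ y : V, y ≠ x → G.Adj x y := by
    intro x hx y hyx
    have hdist : G.dist u x = 1 := by simpa [Nd] using hx
    have hadjux : G.Adj u x := SimpleGraph.dist_eq_one_iff_adj.mp hdist
    rcases eq_or_ne y u with rfl | hyu
    · exact hadjux.symm
    · have hux : u ≠ x := G.ne_of_adj hadjux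
      have hceq : (univ \ ({u, x} : Finset V)).card = n - 2 := by
        rw [Finset.card_sdiff_of_subset (by simp)]
        rw [Finset.card_insert_of_notMem (by simpa using hux), Finset.card_singleton,
          Finset.card_univ, ← hn]
      have hNeq : (Lu G u).neighborFinset x = univ \ ({u, x} : Finset V) := by
        apply Finset.eq_of_subset_of_card_le (Lu_nbr_subset G u x)
        rw [hceq]
        exact (heach x hx).ge
      have hymem : y ∈ (Lu G u).neighborFinset x := by
        rw [hNeq]
        simp [hyu, hyx]
      exact Lu_adj_G_adj G u x y (by simpa using hymem)
  -- construct the embedding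
  have hsccard : ((Nd G u 1)ᶜ : Finset V).card = n - k := by
    rw [Finset.card_compl, hscard, ← hn]
  let g : Fin k ≃ (Nd G u 1) := (finCongr hscard.symm).trans (Nd G u 1).equivFin.symm
  let g' : Fin (n - k) ≃ ((Nd G u 1)ᶜ : Finset V) :=
    (finCongr hsccard.symm).trans ((Nd G u 1)ᶜ : Finset V).equivFin.symm
  let f : Fin n → V := fun i =>
    if h : (i : ℕ) < k then (g ⟨i, h⟩ : V) else (g' ⟨(i : ℕ) - k, by omega⟩ : V)
  have hf_mem : ∀ (i : Fin n) (h : (i : ℕ) < k), f i ∈ Nd G u 1 := by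
    intro i h
    simp only [f, dif_pos h]
    exact (g ⟨i, h⟩).2
  have hf_nmem : ∀ (i : Fin n), ¬ (i : ℕ) < k → f i ∉ Nd G u 1 := by
    intro i h
    simp only [f, dif_neg h]
    have := (g' ⟨(i : ℕ) - k, by omega⟩).2
    exact Finset.mem_compl.mp this
  have hf_inj : Function.Injective f := by
    intro i j hij
    by_cases hi : (i : ℕ) < k <;> by_cases hj : (j : ℕ) < k
    · simp only [f, dif_pos hi, dif_pos hj] at hij
      have := g.injective (Subtype.ext hij)
      have : (⟨(i : ℕ), hi⟩ : Fin k) = ⟨(j : ℕ), hj⟩ := this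
      exact Fin.ext (by simpa using congrArg Fin.val this)
    · exact absurd (hij ▸ hf_mem i hi) (hf_nmem j hj)
    · exact absurd (hij.symm ▸ hf_mem j hj) (hf_nmem i hi)
    · simp only [f, dif_neg hi, dif_neg hj] at hij
      have := g'.injective (Subtype.ext hij)
      have h2 : (i : ℕ) - k = (j : ℕ) - k := by simpa using congrArg Fin.val this
      have hi' := i.2; have hj' := j.2
      exact Fin.ext (by omega)
  refine ⟨⟨f, ?_⟩, hf_inj⟩
  intro i j hadj
  obtain ⟨hne, hik | hjk⟩ := hadj
  · have hmem := hf_mem i hik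
    have hne' : f j ≠ f i := fun h => hne (hf_inj h.symm)
    exact hdom (f i) hmem (f j) hne'
  · have hmem := hf_mem j hjk
    have hne' : f i ≠ f j := fun h => hne (hf_inj h)
    exact (hdom (f j) hmem (f i) hne').symm
end

section
/- Let F = ⋃_{i=1}^{t} K_{1,m_i} be a star forest with m_1 ≥ m_2 ≥ … ≥ m_t ≥ 1. For sufficiently large m, the Turán number satisfies ex(m, F) = max_{1 ≤ i ≤ t} { (i−1)(m−i+1) + C(i−1, 2) + ⌊(m_i − 1)(m−i+1)/2⌋ }. -/
open Finset SimpleGraph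
open scoped Classical

/-- The star forest `⋃_{i} K_{1, m i}`: component `i` has center `⟨i, none⟩` and
leaves `⟨i, some j⟩` for `j : Fin (m i)`. -/
def starForest (t : ℕ) (m : Fin t → ℕ) : SimpleGraph (Σ i : Fin t, Option (Fin (m i))) :=
  SimpleGraph.fromRel (fun a b => a.1 = b.1 ∧ a.2 = none ∧ b.2 ≠ none)

/-- The Turán number `ex(N, F)`: the maximum number of edges of an `F`-free
graph on `N` vertices. -/
noncomputable def exNum (N : ℕ) {W : Type*} (F : SimpleGraph W) : ℕ :=
  sSup {e | ∃ G : SimpleGraph (Fin N), ¬ Contains G F ∧ e = G.edgeFinset.card}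

/-! ### Arithmetic: the formula -/

def phi (n i q : ℕ) : ℕ := i * (n - i) + Nat.choose i 2 + (q - 1) * (n - i) / 2

lemma phi_mono {n n' : ℕ} (i q : ℕ) (h : n ≤ n') : phi n i q ≤ phi n' i q := by
  unfold phi
  have h1 : n - i ≤ n' - i := Nat.sub_le_sub_right h i
  gcongr

lemma phi_succ (n j q : ℕ) (h : j + 2 ≤ n) :
    phi n (j + 1) q = (n - 1) + phi (n - 1) j q := by
  unfold phi
  have hsub : n - (j + 1) = (n - 1) - j := by omega
  rw [hsub]
  have hch : Nat.choose (j + 1) 2 = j + Nat.choose j 2 := by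
    rw [Nat.choose_succ_succ j 1, Nat.choose_one_right]
  rw [hch]
  set s := n - 1 - j with hs
  have hmul : (j + 1) * s = j * s + s := by ring
  rw [hmul]
  have : s + j = n - 1 := by omega
  omega

/-! ### Support and degree counting -/

variable {V : Type*} [Fintype V]

noncomputable def suppF (G : SimpleGraph V) : Finset V :=
  Finset.univ.filter (fun v => G.degree v ≠ 0)

lemma mem_suppF {G : SimpleGraph V} {v : V} : v ∈ suppF G ↔ G.degree v ≠ 0 := by
  simp [suppF]

lemma mem_suppF_of_adj {G : SimpleGraph V} {v w : V} (h : G.Adj v w) : v ∈ suppF G := by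
  rw [mem_suppF, ← SimpleGraph.card_neighborFinset_eq_degree]
  have : w ∈ G.neighborFinset v := by rwa [SimpleGraph.mem_neighborFinset]
  exact fun hc => by simp [Finset.card_eq_zero.mp hc] at this

lemma sum_deg_supp (G : SimpleGraph V) :
    ∑ v ∈ suppF G, G.degree v = 2 * G.edgeFinset.card := by
  rw [← SimpleGraph.sum_degrees_eq_twice_card_edges]
  exact Finset.sum_subset (Finset.subset_univ _)
    (fun x _ hx => by simpa [mem_suppF] using hx)

lemma deg_le_supp (G : SimpleGraph V) (v : V) : G.degree v ≤ (suppF G).card - 1 := by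
  by_cases hv : G.degree v = 0
  · omega
  · have hsub : G.neighborFinset v ⊆ (suppF G).erase v := by
      intro u hu
      rw [SimpleGraph.mem_neighborFinset] at hu
      exact Finset.mem_erase.mpr ⟨fun h => (by subst h; exact G.irrefl hu),
        mem_suppF_of_adj hu.symm⟩
    calc G.degree v = (G.neighborFinset v).card :=
          (SimpleGraph.card_neighborFinset_eq_degree G v).symm
      _ ≤ ((suppF G).erase v).card := Finset.card_le_card hsub
      _ ≤ (suppF G).card - 1 := by
          rw [Finset.card_erase_of_mem]
          · exact mem_suppF.mpr hv
lemma edge_le_choose (G : SimpleGraph V) :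
    G.edgeFinset.card ≤ Nat.choose (suppF G).card 2 := by
  have h2 : 2 * G.edgeFinset.card ≤ (suppF G).card * ((suppF G).card - 1) := by
    rw [← sum_deg_supp]
    calc ∑ v ∈ suppF G, G.degree v ≤ ∑ _v ∈ suppF G, ((suppF G).card - 1) :=
          Finset.sum_le_sum (fun v _ => deg_le_supp G v)
      _ = (suppF G).card * ((suppF G).card - 1) := by
          rw [Finset.sum_const, smul_eq_mul]
  rw [Nat.choose_two_right]
  omega

lemma edge_le_of_max_deg {G : SimpleGraph V} {d : ℕ} (h : ∀ v, G.degree v ≤ d) :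
    G.edgeFinset.card ≤ d * (suppF G).card / 2 := by
  have h2 : 2 * G.edgeFinset.card ≤ d * (suppF G).card := by
    rw [← sum_deg_supp]
    calc ∑ v ∈ suppF G, G.degree v ≤ ∑ _v ∈ suppF G, d :=
          Finset.sum_le_sum (fun v _ => h v)
      _ = d * (suppF G).card := by rw [Finset.sum_const, smul_eq_mul, mul_comm]
  omega

def delB (G : SimpleGraph V) (B : Finset V) : SimpleGraph V where
  Adj x y := G.Adj x y ∧ x ∉ B ∧ y ∉ B
  symm := ⟨fun x y ⟨h, hx, hy⟩ => ⟨h.symm, hy, hx⟩⟩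
  loopless := ⟨fun x ⟨h, _, _⟩ => G.irrefl h⟩

lemma delB_le (G : SimpleGraph V) (B : Finset V) : delB G B ≤ G := fun _ _ h => h.1

lemma edge_split (G : SimpleGraph V) (B : Finset V) :
    G.edgeFinset.card ≤ (∑ b ∈ B, G.degree b) + (delB G B).edgeFinset.card := by
  classical
  have hsub : G.edgeFinset ⊆ (delB G B).edgeFinset ∪ B.biUnion (fun b => G.incidenceFinset b) := by
    intro e he
    rw [SimpleGraph.mem_edgeFinset] at he
    induction e with
    | h x y =>
      rw [SimpleGraph.mem_edgeSet] at he
      by_cases hx : x ∈ B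
      · exact Finset.mem_union_right _ (Finset.mem_biUnion.mpr ⟨x, hx, by
          rw [SimpleGraph.mem_incidenceFinset]
          exact ⟨he, Sym2.mem_mk_left x y⟩⟩)
      · by_cases hy : y ∈ B
        · exact Finset.mem_union_right _ (Finset.mem_biUnion.mpr ⟨y, hy, by
            rw [SimpleGraph.mem_incidenceFinset]
            exact ⟨he, Sym2.mem_mk_right x y⟩⟩)
        · exact Finset.mem_union_left _ (by
            rw [SimpleGraph.mem_edgeFinset, SimpleGraph.mem_edgeSet]
            exact ⟨he, hx, hy⟩)
  calc G.edgeFinset.card ≤ ((delB G B).edgeFinset ∪ B.biUnion (fun b => G.incidenceFinset b)).card :=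
        Finset.card_le_card hsub
    _ ≤ (delB G B).edgeFinset.card + (B.biUnion (fun b => G.incidenceFinset b)).card :=
        Finset.card_union_le _ _
    _ ≤ (delB G B).edgeFinset.card + ∑ b ∈ B, (G.incidenceFinset b).card := by
        gcongr; exact Finset.card_biUnion_le
    _ = (delB G B).edgeFinset.card + ∑ b ∈ B, G.degree b := by
        congr 1
        exact Finset.sum_congr rfl (fun b _ => G.card_incidenceFinset_eq_degree b)
    _ = _ := by omega

lemma suppF_delB (G : SimpleGraph V) (B : Finset V) :
    suppF (delB G B) ⊆ suppF G \ B := by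
  intro x hx
  rw [mem_suppF, ← SimpleGraph.card_neighborFinset_eq_degree] at hx
  obtain ⟨y, hy⟩ := Finset.card_ne_zero.mp hx
  rw [SimpleGraph.mem_neighborFinset] at hy
  exact Finset.mem_sdiff.mpr ⟨mem_suppF_of_adj hy.1, hy.2.1⟩

/-! ### star forest basics -/

lemma starForest_adj_mk {t : ℕ} {m : Fin t → ℕ} (i : Fin t) (j : Fin (m i)) :
    (starForest t m).Adj ⟨i, none⟩ ⟨i, some j⟩ := by
  rw [starForest, SimpleGraph.fromRel_adj]
  refine ⟨by simp, Or.inl ⟨rfl, rfl, by simp⟩⟩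

lemma starForest_adj_elim {t : ℕ} {m : Fin t → ℕ} {a b : Σ i : Fin t, Option (Fin (m i))}
    (h : (starForest t m).Adj a b) :
    a.1 = b.1 ∧ a ≠ b ∧ ((a.2 = none ∧ b.2 ≠ none) ∨ (b.2 = none ∧ a.2 ≠ none)) := by
  rw [starForest, SimpleGraph.fromRel_adj] at h
  obtain ⟨hne, hor⟩ := h
  rcases hor with ⟨h1, h2⟩ | ⟨h1, h2⟩
  · exact ⟨h1, hne, Or.inl h2⟩
  · exact ⟨h1.symm, hne, Or.inr h2⟩

lemma starForest_no_isolated {t : ℕ} {m : Fin t → ℕ} (hm : ∀ i, 1 ≤ m i)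
    (x : Σ i : Fin t, Option (Fin (m i))) : ∃ y, (starForest t m).Adj x y := by
  obtain ⟨i, o⟩ := x
  cases o with
  | none => exact ⟨⟨i, some ⟨0, hm i⟩⟩, starForest_adj_mk i ⟨0, hm i⟩⟩
  | some j => exact ⟨⟨i, none⟩, (starForest_adj_mk i j).symm⟩

lemma contains_starForest_zero {V : Type*} (G : SimpleGraph V) (m : Fin 0 → ℕ) :
    Contains G (starForest 0 m) := by
  have : IsEmpty (Σ i : Fin 0, Option (Fin (m i))) := ⟨fun x => x.1.elim0⟩
  exact ⟨⟨isEmptyElim, fun {a} => isEmptyElim a⟩, fun a => isEmptyElim a⟩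

lemma card_starForest_vert (t : ℕ) (m : Fin t → ℕ) :
    Fintype.card (Σ i : Fin t, Option (Fin (m i))) = ∑ i : Fin t, (m i + 1) := by
  rw [Fintype.card_sigma]
  exact Finset.sum_congr rfl (fun i _ => by simp)

/-- Extend an embedding of the tail star forest by a star at `v` with leaves in `W`. -/
lemma contains_cons {V : Type*} [Fintype V] (G : SimpleGraph V) {t : ℕ} (m : Fin (t+1) → ℕ)
    (v : V) (W : Finset V) (hW : W ⊆ G.neighborFinset v) (hcard : m 0 ≤ W.card)
    (f : starForest t (Fin.tail m) →g G) (hf : Function.Injective f)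
    (hdv : ∀ x, f x ≠ v) (hdW : ∀ x, f x ∉ W) :
    Contains G (starForest (t+1) m) := by
  classical
  obtain ⟨W', hW'sub, hW'card⟩ := Finset.exists_subset_card_eq hcard
  set ι : Fin (m 0) → V := fun j => (W'.equivFin.symm (Fin.cast hW'card.symm j) : V) with hι
  have hιW : ∀ j, ι j ∈ W := fun j => hW'sub (W'.equivFin.symm (Fin.cast hW'card.symm j)).2
  have hιinj : Function.Injective ι := by
    intro a b h
    have := Subtype.ext h
    have := W'.equivFin.symm.injective this
    simpa [Fin.ext_iff] using this
  have hvW : v ∉ W := by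
    intro hv
    have h := hW hv
    rw [SimpleGraph.mem_neighborFinset] at h
    exact G.irrefl h
  let g : (Σ i : Fin (t+1), Option (Fin (m i))) → V := fun x =>
    Fin.cases (motive := fun i => Option (Fin (m i)) → V)
      (fun o => Option.rec v (fun j => ι j) o)
      (fun i' o => f ⟨i', o⟩) x.1 x.2
  have hg0n : g ⟨0, none⟩ = v := rfl
  have hg0s : ∀ j, g ⟨0, some j⟩ = ι j := fun j => rfl
  have hgs : ∀ (i' : Fin t) (o : Option (Fin (m i'.succ))), g ⟨i'.succ, o⟩ = f ⟨i', o⟩ := by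
    intro i' o
    simp only [g, Fin.cases_succ]
  have hadj : ∀ (i : Fin (t+1)) (j : Fin (m i)), G.Adj (g ⟨i, none⟩) (g ⟨i, some j⟩) := by
    intro i
    induction i using Fin.cases with
    | zero =>
      intro j
      rw [hg0n, hg0s]
      exact (SimpleGraph.mem_neighborFinset _ _ _).mp (hW (hιW j))
    | succ i' =>
      intro j
      rw [hgs, hgs]
      exact f.map_adj (starForest_adj_mk (m := Fin.tail m) i' j)
  have hhom : ∀ {a b}, (starForest (t+1) m).Adj a b → G.Adj (g a) (g b) := by
    intro a b hab
    obtain ⟨h1, _, h2⟩ := starForest_adj_elim hab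
    obtain ⟨i, o1⟩ := a
    obtain ⟨i2, o2⟩ := b
    simp only at h1
    subst h1
    simp only at h2
    rcases h2 with ⟨ha, hb⟩ | ⟨hb, ha⟩
    · subst ha
      cases o2 with
      | none => exact absurd rfl hb
      | some j => exact hadj i j
    · subst hb
      cases o1 with
      | none => exact absurd rfl ha
      | some j => exact (hadj i j).symm
  have hginj : Function.Injective g := by
    intro a b hab
    obtain ⟨i, o1⟩ := a
    obtain ⟨i2, o2⟩ := b
    induction i using Fin.cases with
    | zero =>
      induction i2 using Fin.cases with
      | zero =>
        cases o1 with
        | none =>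
          cases o2 with
          | none => rfl
          | some j => rw [hg0n, hg0s] at hab; exact absurd (hab ▸ hιW j) hvW
        | some j =>
          cases o2 with
          | none => rw [hg0n, hg0s] at hab; exact absurd (hab.symm ▸ hιW j) hvW
          | some j2 =>
            rw [hg0s, hg0s] at hab
            rw [hιinj hab]
      | succ i2' =>
        exfalso
        rw [hgs] at hab
        cases o1 with
        | none => rw [hg0n] at hab; exact hdv _ hab.symm
        | some j => rw [hg0s] at hab; exact hdW _ (hab ▸ hιW j)
    | succ i1' =>
      induction i2 using Fin.cases with
      | zero =>
        exfalso
        rw [hgs] at hab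
        cases o2 with
        | none => rw [hg0n] at hab; exact hdv _ hab
        | some j => rw [hg0s] at hab; exact hdW _ (hab.symm ▸ hιW j)
      | succ i2' =>
        rw [hgs, hgs] at hab
        have h := hf hab
        obtain ⟨h1, h2⟩ := Sigma.mk.inj_iff.mp h
        subst h1
        rw [eq_of_heq h2]
  exact ⟨⟨g, hhom⟩, hginj⟩

/-! ### Reduction: removing a star -/

lemma not_contains_tail {V : Type*} [Fintype V] {t : ℕ} (m : Fin (t+1) → ℕ)
    (hm : ∀ i, 1 ≤ m i) (G : SimpleGraph V) (B : Finset V) (v : V) (hvB : v ∈ B)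
    (hdeg0 : m 0 ≤ G.degree v)
    (hdeg : (∑ i : Fin t, (m i.succ + 1)) + m 0 ≤ G.degree v ∨ G.neighborFinset v ⊆ B)
    (hfree : ¬ Contains G (starForest (t+1) m)) :
    ¬ Contains (delB G B) (starForest t (Fin.tail m)) := by
  classical
  rintro ⟨f, hf⟩
  apply hfree
  set f' : starForest t (Fin.tail m) →g G := (SimpleGraph.Hom.ofLE (delB_le G B)).comp f with hf'
  have hf'inj : Function.Injective f' := fun a b h => hf (by exact h)
  have havoid : ∀ x, f' x ∉ B := by
    intro x
    obtain ⟨y, hy⟩ := starForest_no_isolated (fun i => hm i.succ) x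
    have : (delB G B).Adj (f x) (f y) := f.map_adj hy
    exact this.2.1
  set I : Finset V := Finset.univ.image (fun x => f' x) with hI
  have hIcard : I.card ≤ ∑ i : Fin t, (m i.succ + 1) := by
    calc I.card ≤ Fintype.card (Σ i : Fin t, Option (Fin (Fin.tail m i))) := by
          apply le_trans (Finset.card_image_le)
          simp
      _ = ∑ i : Fin t, (Fin.tail m i + 1) := card_starForest_vert t (Fin.tail m)
      _ = ∑ i : Fin t, (m i.succ + 1) := rfl
  set W : Finset V := G.neighborFinset v \ I with hW
  have hWsub : W ⊆ G.neighborFinset v := Finset.sdiff_subset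
  have hWcard : m 0 ≤ W.card := by
    rcases hdeg with h | h
    · have h1 : (G.neighborFinset v).card ≤ W.card + I.card :=
        Finset.card_le_card_sdiff_add_card
      rw [SimpleGraph.card_neighborFinset_eq_degree] at h1
      omega
    · have : G.neighborFinset v ∩ I = ∅ := by
        rw [Finset.eq_empty_iff_forall_notMem]
        intro x hx
        obtain ⟨hx1, hx2⟩ := Finset.mem_inter.mp hx
        obtain ⟨y, _, hy⟩ := Finset.mem_image.mp hx2
        exact havoid y (hy ▸ h hx1)
      have : W = G.neighborFinset v := by
        rw [hW, Finset.sdiff_eq_self_iff_disjoint, Finset.disjoint_left]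
        intro a ha hb
        exact (Finset.eq_empty_iff_forall_notMem.mp this) a (Finset.mem_inter.mpr ⟨ha, hb⟩)
      rw [this, SimpleGraph.card_neighborFinset_eq_degree]
      exact hdeg0
  refine contains_cons G m v W hWsub hWcard f' hf'inj ?_ ?_
  · intro x hx
    exact havoid x (hx ▸ hvB)
  · intro x hx
    exact (Finset.mem_sdiff.mp hx).2 (Finset.mem_image.mpr ⟨x, Finset.mem_univ x, rfl⟩)

lemma UB_one {V : Type*} [Fintype V] (m : Fin 1 → ℕ) (hm : ∀ i, 1 ≤ m i) (G : SimpleGraph V)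
    (hfree : ¬ Contains G (starForest 1 m)) :
    G.edgeFinset.card ≤ phi (suppF G).card 0 (m 0) := by
  classical
  have hdeg : ∀ v, G.degree v ≤ m 0 - 1 := by
    intro v
    by_contra hc
    push_neg at hc
    have hd : m 0 ≤ G.degree v := by omega
    apply hfree
    have hempty : IsEmpty (Σ i : Fin 0, Option (Fin (Fin.tail m i))) := ⟨fun x => x.1.elim0⟩
    refine contains_cons G m v (G.neighborFinset v) (le_refl _) ?_
      ⟨isEmptyElim, fun {a} => isEmptyElim a⟩ (fun a => isEmptyElim a)
      (fun x => isEmptyElim x) (fun x => isEmptyElim x)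
    rwa [SimpleGraph.card_neighborFinset_eq_degree]
  have := edge_le_of_max_deg hdeg
  unfold phi
  simpa using this

/-! ### The upper bound -/

lemma UB (t : ℕ) (ht : 1 ≤ t) : ∀ m : Fin t → ℕ, (∀ i, 1 ≤ m i) → Antitone m →
    ∃ K : ℕ, (t = 1 → K = 0) ∧ ∀ (V : Type) [Fintype V] (G : SimpleGraph V),
      ¬ Contains G (starForest t m) →
      G.edgeFinset.card ≤
        max (Finset.univ.sup (fun j : Fin t => phi (suppF G).card (j : ℕ) (m j))) K := by
  induction t, ht using Nat.le_induction with
  | base =>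
    intro m hm _
    refine ⟨0, fun _ => rfl, ?_⟩
    intro V _ G hfree
    refine le_max_of_le_left ?_
    have h := UB_one m hm G hfree
    exact le_trans h (Finset.le_sup (f := fun j : Fin 1 => phi (suppF G).card (j : ℕ) (m j)) (Finset.mem_univ (0 : Fin 1)))
  | succ t ht IH =>
    intro m hm hmono
    obtain ⟨K', hK'1, hIH⟩ := IH (Fin.tail m) (fun i => hm i.succ)
      (fun i j hij => hmono (by simpa [Fin.succ_le_succ_iff] using hij))
    set D : ℕ := ∑ i : Fin (t+1), (m i + 1) with hD
    have hDtail : (∑ i : Fin t, (m i.succ + 1)) + m 0 + 1 = D := by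
      rw [hD, Fin.sum_univ_succ]
      ring
    have hDm0 : m 0 + 1 ≤ D := by
      rw [hD]
      exact Finset.single_le_sum (f := fun i => m i + 1) (fun i _ => Nat.zero_le _)
        (Finset.mem_univ 0)
    set L : ℕ := K' + D * D + 2 * (t + 1) + 2 with hL
    refine ⟨L.choose 2, fun h => by omega, ?_⟩
    intro V _ G hfree
    set n₀ := (suppF G).card with hn₀
    by_cases hsmall : n₀ ≤ L
    · refine le_max_of_le_right ?_
      exact le_trans (edge_le_choose G) (Nat.choose_le_choose 2 hsmall)
    push_neg at hsmall
    refine le_max_of_le_left ?_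
    by_cases hdeg : ∀ v, G.degree v ≤ m 0 - 1
    · refine le_trans (le_trans (edge_le_of_max_deg hdeg) ?_)
        (Finset.le_sup (Finset.mem_univ (0 : Fin (t+1))))
      unfold phi
      simp
      exact le_refl _
    push_neg at hdeg
    obtain ⟨v, hv⟩ := hdeg
    have hvdeg : m 0 ≤ G.degree v := by have := hm 0; omega
    -- common facts
    have hsucc_le : ∀ (j : Fin t) (q : ℕ), phi n₀ ((j : ℕ) + 1) q = (n₀ - 1) + phi (n₀ - 1) (j : ℕ) q := by
      intro j q
      refine phi_succ n₀ (j : ℕ) q ?_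
      have := j.2
      omega
    haveI : Nonempty (Fin t) := ⟨⟨0, ht⟩⟩
    by_cases hbig : ∃ w, D ≤ G.degree w
    · -- Case A : delete one vertex of huge degree
      obtain ⟨w, hw⟩ := hbig
      set G' := delB G {w} with hG'
      have hwsupp : w ∈ suppF G := by
        rw [mem_suppF]
        omega
      have hfree' : ¬ Contains G' (starForest t (Fin.tail m)) := by
        refine not_contains_tail m hm G {w} w (Finset.mem_singleton_self w) (by omega)
          (Or.inl (by omega)) hfree
      have hsplit : G.edgeFinset.card ≤ G.degree w + G'.edgeFinset.card := by
        have := edge_split G {w}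
        rwa [Finset.sum_singleton] at this
      have hsupp' : (suppF G').card ≤ n₀ - 1 := by
        have h1 : suppF G' ⊆ suppF G \ {w} := suppF_delB G {w}
        have h2 := Finset.card_le_card h1
        rwa [Finset.card_sdiff_of_subset (Finset.singleton_subset_iff.mpr hwsupp),
          Finset.card_singleton] at h2
      have hdegw : G.degree w ≤ n₀ - 1 := deg_le_supp G w
      have hE' := hIH V G' hfree'
      rcases max_choice (Finset.univ.sup (fun j : Fin t => phi (suppF G').card (j : ℕ) (Fin.tail m j))) K' with hmx | hmx
      · rw [hmx] at hE'
        obtain ⟨j₀, _, hj₀⟩ := Finset.exists_mem_eq_sup Finset.univ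
          (Finset.univ_nonempty) (fun j : Fin t => phi (suppF G').card (j : ℕ) (Fin.tail m j))
        rw [hj₀] at hE'
        calc G.edgeFinset.card ≤ G.degree w + phi (suppF G').card (j₀ : ℕ) (Fin.tail m j₀) := by omega
          _ ≤ (n₀ - 1) + phi (n₀ - 1) (j₀ : ℕ) (m j₀.succ) := by
              have := phi_mono (n := (suppF G').card) (n' := n₀ - 1) (j₀ : ℕ) (m j₀.succ) hsupp'
              exact Nat.add_le_add hdegw this
          _ = phi n₀ ((j₀ : ℕ) + 1) (m j₀.succ) := (hsucc_le j₀ (m j₀.succ)).symm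
          _ = phi n₀ ((j₀.succ : Fin (t+1)) : ℕ) (m j₀.succ) := by rw [Fin.val_succ]
          _ ≤ _ := Finset.le_sup (f := fun j : Fin (t+1) => phi n₀ (j : ℕ) (m j)) (Finset.mem_univ j₀.succ)
      · rw [hmx] at hE'
        have hlast : (n₀ - 1) + K' ≤ phi n₀ t (m ⟨t, by omega⟩) := by
          unfold phi
          rcases Nat.lt_or_ge t 2 with h2 | h2
          · have ht1 : t = 1 := by omega
            have hK0 : K' = 0 := hK'1 ht1
            have hmul : 1 * (n₀ - t) ≤ t * (n₀ - t) := Nat.mul_le_mul_right _ ht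
            omega
          · have hmul : 2 * (n₀ - t) ≤ t * (n₀ - t) := Nat.mul_le_mul_right _ h2
            omega
        calc G.edgeFinset.card ≤ (n₀ - 1) + K' := by omega
          _ ≤ _ := le_trans hlast (Finset.le_sup (f := fun j : Fin (t+1) => phi n₀ (j : ℕ) (m j)) (Finset.mem_univ ⟨t, by omega⟩))
    · -- Case B : all degrees < D, delete the closed ball around v
      push_neg at hbig
      set B : Finset V := insert v (G.neighborFinset v) with hB
      set G' := delB G B with hG'
      have hvB : v ∈ B := Finset.mem_insert_self v _
      have hvsupp : v ∈ suppF G := by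
        rw [mem_suppF]
        omega
      have hfree' : ¬ Contains G' (starForest t (Fin.tail m)) :=
        not_contains_tail m hm G B v hvB hvdeg (Or.inr (Finset.subset_insert v _)) hfree
      have hBcard : B.card ≤ D := by
        calc B.card ≤ (G.neighborFinset v).card + 1 := Finset.card_insert_le v _
          _ = G.degree v + 1 := by rw [SimpleGraph.card_neighborFinset_eq_degree]
          _ ≤ D := by have := hbig v; omega
      have hsplit : G.edgeFinset.card ≤ D * D + G'.edgeFinset.card := by
        refine le_trans (edge_split G B) ?_
        have h1 : ∑ b ∈ B, G.degree b ≤ B.card * D :=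
          Finset.sum_le_card_nsmul B _ D (fun b _ => le_of_lt (hbig b))
        have h2 : B.card * D ≤ D * D := Nat.mul_le_mul_right D hBcard
        have h3 : (delB G B).edgeFinset.card = G'.edgeFinset.card := rfl
        omega
      have hsupp' : (suppF G').card ≤ n₀ - 1 := by
        have h1 : suppF G' ⊆ suppF G \ {v} := by
          refine subset_trans (suppF_delB G B) ?_
          intro x hx
          rw [Finset.mem_sdiff] at hx ⊢
          exact ⟨hx.1, fun hc => hx.2 (Finset.mem_singleton.mp hc ▸ hvB)⟩
        have h2 := Finset.card_le_card h1
        rwa [Finset.card_sdiff_of_subset (Finset.singleton_subset_iff.mpr hvsupp),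
          Finset.card_singleton] at h2
      have hE' := hIH V G' hfree'
      rcases max_choice (Finset.univ.sup (fun j : Fin t => phi (suppF G').card (j : ℕ) (Fin.tail m j))) K' with hmx | hmx
      · rw [hmx] at hE'
        obtain ⟨j₀, _, hj₀⟩ := Finset.exists_mem_eq_sup Finset.univ
          (Finset.univ_nonempty) (fun j : Fin t => phi (suppF G').card (j : ℕ) (Fin.tail m j))
        rw [hj₀] at hE'
        calc G.edgeFinset.card ≤ D * D + phi (suppF G').card (j₀ : ℕ) (Fin.tail m j₀) := by omega
          _ ≤ (n₀ - 1) + phi (n₀ - 1) (j₀ : ℕ) (m j₀.succ) := by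
              have h3 := phi_mono (n := (suppF G').card) (n' := n₀ - 1) (j₀ : ℕ) (m j₀.succ) hsupp'
              have h4 : D * D ≤ n₀ - 1 := by omega
              exact Nat.add_le_add h4 h3
          _ = phi n₀ ((j₀ : ℕ) + 1) (m j₀.succ) := (hsucc_le j₀ (m j₀.succ)).symm
          _ = phi n₀ ((j₀.succ : Fin (t+1)) : ℕ) (m j₀.succ) := by rw [Fin.val_succ]
          _ ≤ _ := Finset.le_sup (f := fun j : Fin (t+1) => phi n₀ (j : ℕ) (m j)) (Finset.mem_univ j₀.succ)
      · rw [hmx] at hE'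
        have hlast : D * D + K' ≤ phi n₀ t (m ⟨t, by omega⟩) := by
          unfold phi
          have hmul : 1 * (n₀ - t) ≤ t * (n₀ - t) := Nat.mul_le_mul_right _ ht
          omega
        calc G.edgeFinset.card ≤ D * D + K' := by omega
          _ ≤ _ := le_trans hlast (Finset.le_sup (f := fun j : Fin (t+1) => phi n₀ (j : ℕ) (m j)) (Finset.mem_univ ⟨t, by omega⟩))

/-! ### Cayley graphs over ZMod -/

def cayley {s : ℕ} (S : Finset (ZMod s)) : SimpleGraph (ZMod s) :=
  SimpleGraph.fromRel (fun x y => y - x ∈ S)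

lemma cayley_nbr {s : ℕ} [NeZero s] (S : Finset (ZMod s))
    (hsym : ∀ a ∈ S, -a ∈ S) (h0 : (0 : ZMod s) ∉ S) (x : ZMod s) :
    (cayley S).neighborFinset x = S.image (fun a => x + a) := by
  ext y
  rw [SimpleGraph.mem_neighborFinset, cayley, SimpleGraph.fromRel_adj, Finset.mem_image]
  constructor
  · rintro ⟨hne, h | h⟩
    · exact ⟨y - x, h, by ring⟩
    · refine ⟨y - x, ?_, by ring⟩
      have := hsym _ h
      simpa using this
  · rintro ⟨a, ha, rfl⟩
    refine ⟨fun h => h0 ?_, Or.inl (by simpa using ha)⟩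
    have : a = 0 := by
      have := left_eq_add.mp h
      exact this
    rwa [this] at ha

lemma cayley_degree {s : ℕ} [NeZero s] (S : Finset (ZMod s))
    (hsym : ∀ a ∈ S, -a ∈ S) (h0 : (0 : ZMod s) ∉ S) (x : ZMod s) :
    (cayley S).degree x = S.card := by
  rw [← SimpleGraph.card_neighborFinset_eq_degree, cayley_nbr S hsym h0 x,
    Finset.card_image_of_injective _ (add_right_injective x)]

def circS (s k : ℕ) : Finset (ZMod s) :=
  ((Finset.Icc 1 k).image (fun j : ℕ => (j : ZMod s))) ∪
    ((Finset.Icc 1 k).image (fun j : ℕ => -(j : ZMod s)))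

lemma circS_symm (s k : ℕ) : ∀ a ∈ circS s k, -a ∈ circS s k := by
  intro a ha
  rw [circS, Finset.mem_union] at ha ⊢
  rcases ha with h | h
  · obtain ⟨j, hj, rfl⟩ := Finset.mem_image.mp h
    exact Or.inr (Finset.mem_image.mpr ⟨j, hj, rfl⟩)
  · obtain ⟨j, hj, rfl⟩ := Finset.mem_image.mp h
    exact Or.inl (Finset.mem_image.mpr ⟨j, hj, by rw [neg_neg]⟩)

lemma val_circS {s k : ℕ} [NeZero s] (hk : 2 * k < s) {a : ZMod s} (ha : a ∈ circS s k) :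
    (1 ≤ a.val ∧ a.val ≤ k) ∨ (s - k ≤ a.val ∧ a.val ≤ s - 1) := by
  rw [circS, Finset.mem_union] at ha
  rcases ha with h | h
  · obtain ⟨j, hj, rfl⟩ := Finset.mem_image.mp h
    rw [Finset.mem_Icc] at hj
    left
    rw [ZMod.val_cast_of_lt (by omega)]
    exact hj
  · obtain ⟨j, hj, rfl⟩ := Finset.mem_image.mp h
    rw [Finset.mem_Icc] at hj
    right
    have hj0 : (j : ZMod s) ≠ 0 := by
      intro hc
      have := ZMod.val_cast_of_lt (a := j) (n := s) (by omega)
      rw [hc] at this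
      simp at this
      omega
    rw [ZMod.neg_val, if_neg hj0, ZMod.val_cast_of_lt (by omega)]
    omega

lemma circS_not_zero {s k : ℕ} [NeZero s] (hk : 2 * k < s) : (0 : ZMod s) ∉ circS s k := by
  intro h
  have := val_circS hk h
  simp [ZMod.val_zero] at this
  omega

lemma circS_card {s k : ℕ} [NeZero s] (hk : 2 * k < s) : (circS s k).card = 2 * k := by
  rw [circS]
  have hval : ∀ j ∈ Finset.Icc 1 k, ((j : ZMod s)).val = j := by
    intro j hj
    rw [Finset.mem_Icc] at hj
    exact ZMod.val_cast_of_lt (by omega)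
  have hinj1 : Set.InjOn (fun j : ℕ => (j : ZMod s)) (Finset.Icc 1 k) := by
    intro a ha b hb hab
    have := congrArg ZMod.val hab
    simpa [hval a ha, hval b hb] using this
  have hinj2 : Set.InjOn (fun j : ℕ => -(j : ZMod s)) (Finset.Icc 1 k) := by
    intro a ha b hb hab
    have : ((a : ZMod s)) = (b : ZMod s) := by
      have := congrArg Neg.neg hab
      simpa using this
    have := congrArg ZMod.val this
    simpa [hval a ha, hval b hb] using this
  rw [Finset.card_union_of_disjoint, Finset.card_image_of_injOn hinj1,
    Finset.card_image_of_injOn hinj2]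
  · rw [Nat.card_Icc]
    omega
  · rw [Finset.disjoint_left]
    rintro a h1 h2
    obtain ⟨j1, hj1, rfl⟩ := Finset.mem_image.mp h1
    obtain ⟨j2, hj2, he⟩ := Finset.mem_image.mp h2
    rw [Finset.mem_Icc] at hj1 hj2
    have hj20 : ((j2 : ZMod s)) ≠ 0 := by
      intro hc
      have := congrArg ZMod.val hc
      rw [ZMod.val_cast_of_lt (by omega)] at this
      simp at this
      omega
    have hv : (-(j2 : ZMod s)).val = s - j2 := by
      rw [ZMod.neg_val, if_neg hj20, ZMod.val_cast_of_lt (by omega)]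
    have hv2 : ((j1 : ZMod s)).val = j1 := ZMod.val_cast_of_lt (by omega)
    have := congrArg ZMod.val he
    rw [hv] at this
    rw [hv2] at this
    omega

/-! ### Near-regular graphs -/

lemma edge_card_congr {V : Type*} (G : SimpleGraph V) (i1 i2 : Fintype G.edgeSet) :
    @Finset.card _ (@SimpleGraph.edgeFinset _ G i1) =
      @Finset.card _ (@SimpleGraph.edgeFinset _ G i2) := by
  rw [Subsingleton.elim i1 i2]

lemma degree_congr {V : Type*} [Fintype V] (G : SimpleGraph V) (v : V)
    (i1 i2 : Fintype (G.neighborSet v)) :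
    @SimpleGraph.degree _ G v i1 = @SimpleGraph.degree _ G v i2 := by
  rw [Subsingleton.elim i1 i2]

lemma NR (d s : ℕ) [NeZero s] (hs : 2 * d + 2 ≤ s) :
    ∃ H : SimpleGraph (ZMod s), (∀ v, H.degree v ≤ d) ∧ H.edgeFinset.card = d * s / 2 := by
  have hcards : Fintype.card (ZMod s) = s := ZMod.card s
  rcases Nat.even_or_odd d with hd | hd
  · -- d even
    obtain ⟨k, hk⟩ := hd
    have hks : 2 * k < s := by omega
    set S := circS s k with hS
    have hdeg : ∀ v, (cayley S).degree v = d := by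
      intro v
      rw [cayley_degree S (circS_symm s k) (circS_not_zero hks), circS_card hks]
      omega
    refine ⟨cayley S, fun v => le_of_eq (hdeg v), ?_⟩
    have hsum : ∑ v : ZMod s, (cayley S).degree v = 2 * (cayley S).edgeFinset.card :=
      SimpleGraph.sum_degrees_eq_twice_card_edges _
    rw [Finset.sum_congr rfl (fun v _ => hdeg v), Finset.sum_const, smul_eq_mul,
      Finset.card_univ, hcards] at hsum
    have hP : s * d = d * s := by ring
    omega
  · -- d odd
    obtain ⟨k, hk⟩ := hd
    have hks : 2 * k < s := by omega
    rcases Nat.even_or_odd s with hse | hso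
    · -- s even : add the element s/2
      obtain ⟨c2, hc2⟩ := hse
      have hs2 : s / 2 + s / 2 = s := by omega
      set cc : ZMod s := ((s / 2 : ℕ) : ZMod s) with hcc
      have hccval : cc.val = s / 2 := ZMod.val_cast_of_lt (by omega)
      have hccne : cc ≠ 0 := by
        intro h
        rw [h, ZMod.val_zero] at hccval
        omega
      have hcc2 : cc + cc = 0 := by
        rw [hcc, ← Nat.cast_add, hs2, ZMod.natCast_self]
      have hccneg : -cc = cc := neg_eq_of_add_eq_zero_left hcc2
      have hccnotmem : cc ∉ circS s k := by
        intro h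
        have h2 := val_circS hks h
        rw [hccval] at h2
        rcases h2 with ⟨h3, h4⟩ | ⟨h3, h4⟩ <;> omega
      set S := insert cc (circS s k) with hS
      have hsym : ∀ a ∈ S, -a ∈ S := by
        intro a ha
        rcases Finset.mem_insert.mp ha with rfl | h
        · rw [hccneg]; exact Finset.mem_insert_self _ _
        · exact Finset.mem_insert_of_mem (circS_symm s k a h)
      have h0 : (0 : ZMod s) ∉ S := by
        rw [hS, Finset.mem_insert]
        push_neg
        exact ⟨fun h => hccne h.symm, circS_not_zero hks⟩
      have hcard : S.card = d := by
        rw [hS, Finset.card_insert_of_notMem hccnotmem, circS_card hks]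
        omega
      have hdeg : ∀ v, (cayley S).degree v = d := by
        intro v
        rw [cayley_degree S hsym h0, hcard]
      refine ⟨cayley S, fun v => le_of_eq (hdeg v), ?_⟩
      have hsum : ∑ v : ZMod s, (cayley S).degree v = 2 * (cayley S).edgeFinset.card :=
        SimpleGraph.sum_degrees_eq_twice_card_edges _
      rw [Finset.sum_congr rfl (fun v _ => hdeg v), Finset.sum_const, smul_eq_mul,
        Finset.card_univ, hcards] at hsum
      have hP : s * d = d * s := by ring
      omega
    · -- s odd : circulant of degree d - 1 = 2k plus a near-perfect matching
      obtain ⟨c, hc⟩ := hso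
      have hc1 : 1 ≤ c := by omega
      set cc : ZMod s := ((c : ℕ) : ZMod s) with hcc
      have hccval : cc.val = c := ZMod.val_cast_of_lt (by omega)
      have hccne : cc ≠ 0 := by
        intro h
        rw [h, ZMod.val_zero] at hccval
        omega
      have hnegccval : (-cc).val = c + 1 := by
        rw [ZMod.neg_val, if_neg hccne, hccval]
        omega
      set M : SimpleGraph (ZMod s) :=
        SimpleGraph.fromRel (fun x y => y = x + cc ∧ x.val < c) with hM
      have haddval : ∀ x : ZMod s, x.val < c → (x + cc).val = x.val + c := by
        intro x hx
        rw [ZMod.val_add, hccval, Nat.mod_eq_of_lt (by omega)]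
      have hsubval : ∀ x : ZMod s, c ≤ x.val → (x - cc).val = x.val - c := by
        intro x hx
        rw [ZMod.val_sub (by rw [hccval]; exact hx), hccval]
      have hMnbr : ∀ x : ZMod s, M.neighborFinset x =
          (if x.val < c then {x + cc} else if x.val < 2 * c then {x - cc} else ∅) := by
        intro x
        ext y
        rw [SimpleGraph.mem_neighborFinset, hM, SimpleGraph.fromRel_adj]
        by_cases hx : x.val < c
        · rw [if_pos hx, Finset.mem_singleton]
          constructor
          · rintro ⟨hne, ⟨rfl, _⟩ | ⟨h1, h2⟩⟩
            · rfl
            · exfalso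
              have := haddval y h2
              rw [← h1] at this
              omega
          · rintro rfl
            refine ⟨fun h => hccne (left_eq_add.mp h), Or.inl ⟨rfl, hx⟩⟩
        · by_cases hx2 : x.val < 2 * c
          · rw [if_neg hx, if_pos hx2, Finset.mem_singleton]
            constructor
            · rintro ⟨hne, ⟨rfl, h⟩ | ⟨h1, h2⟩⟩
              · exact absurd h hx
              · rw [h1]; ring
            · rintro rfl
              have hyval : (x - cc).val = x.val - c := hsubval x (by omega)
              refine ⟨?_, Or.inr ⟨by ring, by omega⟩⟩
              intro h
              exact hccne (sub_eq_self.mp h.symm)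
          · rw [if_neg hx, if_neg hx2]
            simp only [Finset.notMem_empty, iff_false]
            rintro ⟨hne, ⟨rfl, h⟩ | ⟨h1, h2⟩⟩
            · exact hx h
            · have := haddval y h2
              rw [← h1] at this
              omega
      have hMdeg : ∀ x : ZMod s, M.degree x = if x.val < 2 * c then 1 else 0 := by
        intro x
        rw [← SimpleGraph.card_neighborFinset_eq_degree, hMnbr x]
        by_cases hx : x.val < c
        · rw [if_pos hx, if_pos (by omega)]
          exact Finset.card_singleton _
        · by_cases hx2 : x.val < 2 * c
          · rw [if_neg hx, if_pos hx2, if_pos hx2]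
            exact Finset.card_singleton _
          · rw [if_neg hx, if_neg hx2, if_neg hx2]
            exact Finset.card_empty
      set C : SimpleGraph (ZMod s) := cayley (circS s k) with hC
      have hCdeg : ∀ v, C.degree v = 2 * k := by
        intro v
        rw [hC, cayley_degree _ (circS_symm s k) (circS_not_zero hks), circS_card hks]
      set H : SimpleGraph (ZMod s) := C ⊔ M with hH
      have hHnbr : ∀ x, H.neighborFinset x = C.neighborFinset x ∪ M.neighborFinset x := by
        intro x
        ext y
        simp only [SimpleGraph.mem_neighborFinset, Finset.mem_union, hH, SimpleGraph.sup_adj]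
      have hdisj : ∀ x, Disjoint (C.neighborFinset x) (M.neighborFinset x) := by
        intro x
        rw [Finset.disjoint_left]
        intro y h1 h2
        rw [hC, cayley_nbr _ (circS_symm s k) (circS_not_zero hks)] at h1
        obtain ⟨a, ha, rfl⟩ := Finset.mem_image.mp h1
        have hav := val_circS hks ha
        rw [hMnbr x] at h2
        by_cases hx : x.val < c
        · rw [if_pos hx, Finset.mem_singleton] at h2
          have ha2 : a = cc := add_left_cancel h2
          rw [ha2, hccval] at hav
          rcases hav with ⟨h3, h4⟩ | ⟨h3, h4⟩ <;> omega
        · by_cases hx2 : x.val < 2 * c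
          · rw [if_neg hx, if_pos hx2, Finset.mem_singleton] at h2
            have ha2 : a = -cc := by
              have h3 : x + a = x + (-cc) := by rw [h2]; ring
              exact add_left_cancel h3
            rw [ha2, hnegccval] at hav
            rcases hav with ⟨h3, h4⟩ | ⟨h3, h4⟩ <;> omega
          · rw [if_neg hx, if_neg hx2] at h2
            exact absurd h2 (Finset.notMem_empty _)
      have hHdeg : ∀ x, H.degree x = 2 * k + M.degree x := by
        intro x
        rw [← SimpleGraph.card_neighborFinset_eq_degree, hHnbr x,
          Finset.card_union_of_disjoint (hdisj x), ← hCdeg x,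
          SimpleGraph.card_neighborFinset_eq_degree, SimpleGraph.card_neighborFinset_eq_degree]
      have hMd_le : ∀ x, M.degree x ≤ 1 := by
        intro x
        rw [hMdeg x]
        split <;> omega
      have hHd_le : ∀ v, H.degree v ≤ d := by
        intro v
        have h1 := hHdeg v
        have h2 := hMd_le v
        have h3 : d = 2 * k + 1 := hk
        omega
      refine ⟨H, fun v => le_trans (le_of_eq (degree_congr H v _ _)) (hHd_le v), ?_⟩
      -- sum of matching degrees
      have hv0 : ∀ v : ZMod s, (¬ v.val < 2 * c) ↔ v = ((2 * c : ℕ) : ZMod s) := by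
        intro v
        have hvlt := ZMod.val_lt v
        have h2cval : (((2 * c : ℕ) : ZMod s)).val = 2 * c := ZMod.val_cast_of_lt (by omega)
        constructor
        · intro h
          apply ZMod.val_injective
          rw [h2cval]
          omega
        · intro h
          rw [h, h2cval]
          omega
      have hMsum : ∑ v : ZMod s, M.degree v = s - 1 := by
        rw [Finset.sum_congr rfl (fun v _ => hMdeg v)]
        rw [Finset.sum_ite, Finset.sum_const, Finset.sum_const]
        have hfilt : Finset.univ.filter (fun v : ZMod s => ¬ v.val < 2 * c) =
            {((2 * c : ℕ) : ZMod s)} := by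
          ext v
          simp only [Finset.mem_filter, Finset.mem_univ, true_and, Finset.mem_singleton]
          exact hv0 v
        have hcount : (Finset.univ.filter (fun v : ZMod s => v.val < 2 * c)).card +
            (Finset.univ.filter (fun v : ZMod s => ¬ v.val < 2 * c)).card = s := by
          rw [Finset.card_filter_add_card_filter_not, Finset.card_univ, hcards]
        rw [hfilt, Finset.card_singleton] at hcount
        simp only [smul_eq_mul, mul_one, mul_zero, add_zero]
        omega
      have hsum := SimpleGraph.sum_degrees_eq_twice_card_edges H
      rw [Finset.sum_congr rfl (fun v _ => hHdeg v), Finset.sum_add_distrib,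
        Finset.sum_const, smul_eq_mul, Finset.card_univ, hcards, hMsum] at hsum
      have hP : d * s = 2 * (k * s) + s := by
        rw [hk]
        ring
      have hQ : s * (2 * k) = 2 * (k * s) := by ring
      rw [edge_card_congr H _ H.fintypeEdgeSet]
      omega

/-! ### The join construction -/

def joinG (k : ℕ) {W : Type*} (H : SimpleGraph W) : SimpleGraph (Fin k ⊕ W) :=
  SimpleGraph.fromRel (fun x y =>
    (∃ a, x = Sum.inl a) ∨ (∃ a b, x = Sum.inr a ∧ y = Sum.inr b ∧ H.Adj a b))

lemma joinG_adj_ll {k : ℕ} {W : Type*} (H : SimpleGraph W) (a b : Fin k) :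
    (joinG k H).Adj (Sum.inl a) (Sum.inl b) ↔ a ≠ b := by
  rw [joinG, SimpleGraph.fromRel_adj]
  constructor
  · rintro ⟨hne, _⟩
    exact fun h => hne (by rw [h])
  · intro h
    exact ⟨fun hc => h (Sum.inl.inj hc), Or.inl (Or.inl ⟨a, rfl⟩)⟩

lemma joinG_adj_lr {k : ℕ} {W : Type*} (H : SimpleGraph W) (a : Fin k) (w : W) :
    (joinG k H).Adj (Sum.inl a) (Sum.inr w) := by
  rw [joinG, SimpleGraph.fromRel_adj]
  exact ⟨by simp, Or.inl (Or.inl ⟨a, rfl⟩)⟩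

lemma joinG_adj_rr {k : ℕ} {W : Type*} (H : SimpleGraph W) (w w' : W) :
    (joinG k H).Adj (Sum.inr w) (Sum.inr w') ↔ H.Adj w w' := by
  rw [joinG, SimpleGraph.fromRel_adj]
  constructor
  · rintro ⟨hne, h⟩
    rcases h with (⟨a, ha⟩ | ⟨a, b, ha, hb, hadj⟩) | (⟨a, ha⟩ | ⟨a, b, ha, hb, hadj⟩)
    · exact absurd ha (by simp)
    · cases Sum.inr.inj ha
      cases Sum.inr.inj hb
      exact hadj
    · exact absurd ha (by simp)
    · cases Sum.inr.inj ha
      cases Sum.inr.inj hb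
      exact hadj.symm
  · intro h
    exact ⟨fun hc => H.irrefl (Sum.inr.inj hc ▸ h), Or.inl (Or.inr ⟨w, w', rfl, rfl, h⟩)⟩

lemma joinG_nbr_inl {k : ℕ} {W : Type*} [Fintype W] (H : SimpleGraph W) (a : Fin k) :
    (joinG k H).neighborFinset (Sum.inl a) = Finset.univ.erase (Sum.inl a) := by
  ext y
  rw [SimpleGraph.mem_neighborFinset, Finset.mem_erase]
  cases y with
  | inl b =>
    rw [joinG_adj_ll]
    constructor
    · intro h
      exact ⟨fun hc => h (Sum.inl.inj hc).symm, Finset.mem_univ _⟩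
    · rintro ⟨h, _⟩
      exact fun hc => h (by rw [hc])
  | inr w =>
    simp only [joinG_adj_lr, true_iff]
    exact ⟨by simp, Finset.mem_univ _⟩

lemma joinG_nbr_inr {k : ℕ} {W : Type*} [Fintype W] (H : SimpleGraph W) (w : W) :
    (joinG k H).neighborFinset (Sum.inr w) =
      (Finset.univ.image (Sum.inl : Fin k → Fin k ⊕ W)) ∪
        (H.neighborFinset w).image Sum.inr := by
  ext y
  rw [SimpleGraph.mem_neighborFinset, Finset.mem_union]
  cases y with
  | inl b =>
    simp only [Finset.mem_image, Finset.mem_univ, true_and]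
    constructor
    · intro _
      exact Or.inl ⟨b, rfl⟩
    · intro _
      exact ((joinG k H).adj_symm (joinG_adj_lr H b w))
  | inr w' =>
    rw [joinG_adj_rr]
    simp only [Finset.mem_image]
    constructor
    · intro h
      exact Or.inr ⟨w', (SimpleGraph.mem_neighborFinset _ _ _).mpr h, rfl⟩
    · rintro (⟨b, _, hb⟩ | ⟨w'', hw'', he⟩)
      · exact absurd hb (by simp)
      · cases Sum.inr.inj he
        exact (SimpleGraph.mem_neighborFinset _ _ _).mp hw''

lemma joinG_deg_inl {k : ℕ} {W : Type*} [Fintype W] (H : SimpleGraph W) (a : Fin k) :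
    (joinG k H).degree (Sum.inl a) = k + Fintype.card W - 1 := by
  rw [← SimpleGraph.card_neighborFinset_eq_degree, joinG_nbr_inl,
    Finset.card_erase_of_mem (Finset.mem_univ _), Finset.card_univ]
  simp

lemma joinG_deg_inr {k : ℕ} {W : Type*} [Fintype W] (H : SimpleGraph W) (w : W) :
    (joinG k H).degree (Sum.inr w) = k + H.degree w := by
  rw [← SimpleGraph.card_neighborFinset_eq_degree, joinG_nbr_inr,
    Finset.card_union_of_disjoint, Finset.card_image_of_injective _ Sum.inl_injective,
    Finset.card_image_of_injective _ Sum.inr_injective, Finset.card_univ,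
    Fintype.card_fin, SimpleGraph.card_neighborFinset_eq_degree]
  rw [Finset.disjoint_left]
  rintro x hx hy
  obtain ⟨b, _, rfl⟩ := Finset.mem_image.mp hx
  obtain ⟨w', _, hc⟩ := Finset.mem_image.mp hy
  exact absurd hc (by simp)

lemma joinG_card_edges (k : ℕ) {W : Type*} [Fintype W] (H : SimpleGraph W) :
    (joinG k H).edgeFinset.card =
      k * Fintype.card W + Nat.choose k 2 + H.edgeFinset.card := by
  classical
  set n := Fintype.card W with hn
  have hsum := SimpleGraph.sum_degrees_eq_twice_card_edges (joinG k H)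
  rw [Fintype.sum_sum_type] at hsum
  rw [Finset.sum_congr rfl (fun a _ => joinG_deg_inl H a),
    Finset.sum_congr rfl (fun w _ => joinG_deg_inr H w)] at hsum
  have hsumdeg : ∑ w : W, H.degree w = 2 * H.edgeFinset.card :=
    SimpleGraph.sum_degrees_eq_twice_card_edges H
  rw [Finset.sum_const, Finset.sum_add_distrib, Finset.sum_const, Finset.card_univ,
    Finset.card_univ, Fintype.card_fin, smul_eq_mul, smul_eq_mul, hsumdeg] at hsum
  simp only [← hn] at hsum
  have hch : 2 * Nat.choose k 2 = k * (k - 1) := by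
    have heven : Even (k * (k - 1)) := by
      rcases Nat.even_or_odd k with h | h
      · exact h.mul_right _
      · have h2 : Even (k - 1) := by
          rcases h with ⟨j, hj⟩
          exact ⟨j, by omega⟩
        exact h2.mul_left _
    rw [Nat.choose_two_right, Nat.mul_div_cancel' heven.two_dvd]
  have hx : k * (k + n - 1) + n * k = 2 * (k * n) + k * (k - 1) := by
    rcases k with _ | k'
    · simp
    · have h1 : k' + 1 + n - 1 = k' + n := by omega
      have h2 : k' + 1 - 1 = k' := by omega
      rw [h1, h2]
      ring
  omega

/-! ### The join construction avoids the star forest -/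

lemma joinG_free {t : ℕ} (m : Fin t → ℕ) (hm : ∀ j, 1 ≤ m j) (hmono : Antitone m) (i : Fin t)
    {W : Type*} [Fintype W] (H : SimpleGraph W) (hH : ∀ w, H.degree w ≤ m i - 1) :
    ¬ Contains (joinG (i : ℕ) H) (starForest t m) := by
  classical
  rintro ⟨f, hf⟩
  have hstar : ∃ j : Fin t, (j : ℕ) ≤ (i : ℕ) ∧
      ∀ o : Option (Fin (m j)), ∃ w, f ⟨j, o⟩ = Sum.inr w := by
    by_contra hc
    push_neg at hc
    have hch : ∀ p : Fin ((i : ℕ) + 1), ∃ a : Fin (i : ℕ),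
        ∃ o : Option (Fin (m ⟨(p : ℕ), lt_of_le_of_lt (Nat.lt_succ_iff.mp p.2) i.2⟩)),
          f ⟨⟨(p : ℕ), lt_of_le_of_lt (Nat.lt_succ_iff.mp p.2) i.2⟩, o⟩ = Sum.inl a := by
      intro p
      set jp : Fin t := ⟨(p : ℕ), lt_of_le_of_lt (Nat.lt_succ_iff.mp p.2) i.2⟩ with hjp
      obtain ⟨o, ho⟩ := hc jp (Nat.lt_succ_iff.mp p.2)
      cases hfo : f ⟨jp, o⟩ with
      | inl a => exact ⟨a, o, hfo⟩
      | inr w => exact absurd hfo (ho w)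
    choose g o hg using hch
    have hginj : Function.Injective g := by
      intro p1 p2 hp
      have h1 := hg p1
      have h2 := hg p2
      rw [hp] at h1
      have h3 := hf (h1.trans h2.symm)
      have h4 := congrArg Sigma.fst h3
      simp only at h4
      have h5 : (p1 : ℕ) = (p2 : ℕ) := Fin.mk.inj_iff.mp h4
      exact Fin.ext h5
    have := Fintype.card_le_of_injective g hginj
    simp only [Fintype.card_fin] at this
    omega
  obtain ⟨j, hji, hrt⟩ := hstar
  obtain ⟨c, hc⟩ := hrt none
  have hbl : ∀ l : Fin (m j), ∃ b, f ⟨j, some l⟩ = Sum.inr b := fun l => hrt (some l)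
  choose b hb using hbl
  have hadj : ∀ l : Fin (m j), H.Adj c (b l) := by
    intro l
    have := f.map_adj (starForest_adj_mk j l)
    rw [hc, hb l] at this
    exact (joinG_adj_rr H c (b l)).mp this
  have hbinj : Function.Injective b := by
    intro l1 l2 hl
    have h1 := hb l1
    have h2 := hb l2
    rw [hl] at h1
    have h3 := hf (h1.trans h2.symm)
    obtain ⟨-, h4⟩ := Sigma.mk.inj_iff.mp h3
    exact Option.some.inj (eq_of_heq h4)
  have hcard : m j ≤ H.degree c := by
    have h1 : (Finset.univ : Finset (Fin (m j))).card ≤ (H.neighborFinset c).card := by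
      apply Finset.card_le_card_of_injOn b
      · intro l _
        exact (SimpleGraph.mem_neighborFinset _ _ _).mpr (hadj l)
      · exact fun l1 _ l2 _ h => hbinj h
    rw [Finset.card_univ, Fintype.card_fin, SimpleGraph.card_neighborFinset_eq_degree] at h1
    exact h1
  have hmj : m i ≤ m j := hmono (by rw [Fin.le_def]; exact hji)
  have := hH c
  have := hm i
  omega

/-! ### Transport along isomorphisms, and the extremal construction -/

lemma contains_of_iso {α β γ : Type*} {G : SimpleGraph α} {G' : SimpleGraph β}
    (F : SimpleGraph γ) (φ : G ≃g G') : Contains G F → Contains G' F := by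
  rintro ⟨f, hf⟩
  exact ⟨φ.toHom.comp f, fun a b h => hf (φ.toEquiv.injective h)⟩

lemma construction_mem {t : ℕ} (m : Fin t → ℕ) (hm : ∀ j, 1 ≤ m j) (hmono : Antitone m)
    (i : Fin t) (N : ℕ) (hN : 2 * m i + t + 2 ≤ N) :
    ∃ G : SimpleGraph (Fin N), ¬ Contains G (starForest t m) ∧
      G.edgeFinset.card = (i : ℕ) * (N - (i : ℕ)) + Nat.choose (i : ℕ) 2 +
        (m i - 1) * (N - (i : ℕ)) / 2 := by
  classical
  set k := (i : ℕ) with hk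
  set s := N - k with hs
  set d := m i - 1 with hd
  have hkt : k < t := i.2
  have hsbig : 2 * d + 2 ≤ s := by omega
  haveI : NeZero s := ⟨by omega⟩
  obtain ⟨H, hHdeg, hHcard⟩ := NR d s hsbig
  set J := joinG k H with hJ
  have hJfree : ¬ Contains J (starForest t m) := joinG_free m hm hmono i H hHdeg
  have hkN : N = k + s := by omega
  set e : Fin N ≃ (Fin k ⊕ ZMod s) :=
    ((finCongr hkN).trans finSumFinEquiv.symm).trans
      (Equiv.sumCongr (Equiv.refl (Fin k)) (Fintype.equivFinOfCardEq (ZMod.card s)).symm)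
    with he
  set G : SimpleGraph (Fin N) := J.comap e.toEmbedding with hG
  have hiso : G ≃g J := SimpleGraph.Iso.comap e J
  refine ⟨G, ?_, ?_⟩
  · intro h
    exact hJfree (contains_of_iso _ hiso h)
  · have h1 : G.edgeFinset.card = J.edgeFinset.card := hiso.card_edgeFinset_eq
    exact (edge_card_congr G _ _).trans (h1.trans (by rw [hJ, joinG_card_edges, hHcard, ZMod.card s]))

/-! ### The main theorem -/

theorem stmt_14 (t : ℕ) (ht : 1 ≤ t) (m : Fin t → ℕ) (hm : ∀ i, 1 ≤ m i)
    (hmono : Antitone m) :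
    ∃ M : ℕ, ∀ N ≥ M,
      exNum N (starForest t m) =
        Finset.univ.sup (fun i : Fin t =>
          (i : ℕ) * (N - (i : ℕ)) + Nat.choose (i : ℕ) 2 +
            (m i - 1) * (N - (i : ℕ)) / 2) := by
  classical
  obtain ⟨K, hK1, hUB⟩ := UB t ht m hm hmono
  set i0 : Fin t := ⟨0, ht⟩ with hi0
  set m0 : ℕ := m i0 with hm0
  refine ⟨K + 3 * t + 3 * m0 + 10, ?_⟩
  intro N hN
  have hSUPN : (Finset.univ.sup (fun i : Fin t =>
      (i : ℕ) * (N - (i : ℕ)) + Nat.choose (i : ℕ) 2 + (m i - 1) * (N - (i : ℕ)) / 2)) =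
      Finset.univ.sup (fun i : Fin t => phi N (i : ℕ) (m i)) := rfl
  rw [hSUPN]
  set SUPN := Finset.univ.sup (fun i : Fin t => phi N (i : ℕ) (m i)) with hS
  set SetS := {e | ∃ G : SimpleGraph (Fin N), ¬ Contains G (starForest t m) ∧
    e = G.edgeFinset.card} with hSetS
  have hbdd : BddAbove SetS := by
    refine ⟨Nat.choose N 2, ?_⟩
    rintro e ⟨G, -, rfl⟩
    refine le_trans (edge_le_choose G) (Nat.choose_le_choose 2 ?_)
    calc (suppF G).card ≤ (Finset.univ : Finset (Fin N)).card := Finset.card_le_univ _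
      _ = N := by simp
  have hne : SetS.Nonempty := by
    refine ⟨0, (⊥ : SimpleGraph (Fin N)), ?_, by simp [SimpleGraph.edgeFinset]⟩
    rintro ⟨f, -⟩
    have := f.map_adj (starForest_adj_mk i0 ⟨0, hm i0⟩)
    exact this
  have hupper : exNum N (starForest t m) ≤ SUPN := by
    rw [exNum]
    refine csSup_le hne ?_
    rintro e ⟨G, hGfree, rfl⟩
    have h := hUB (Fin N) G hGfree
    have hn₀N : (suppF G).card ≤ N := by
      calc (suppF G).card ≤ (Finset.univ : Finset (Fin N)).card := Finset.card_le_univ _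
        _ = N := by simp
    have h1 : Finset.univ.sup (fun j : Fin t => phi (suppF G).card (j : ℕ) (m j)) ≤ SUPN := by
      refine Finset.sup_le ?_
      intro j _
      exact le_trans (phi_mono (j : ℕ) (m j) hn₀N)
        (Finset.le_sup (f := fun j : Fin t => phi N (j : ℕ) (m j)) (Finset.mem_univ j))
    have h2 : K ≤ SUPN := by
      rcases Nat.eq_or_lt_of_le ht with h1t | h2t
      · rw [hK1 h1t.symm]
        exact Nat.zero_le _
      · have h2t' : 2 ≤ t := h2t
        have hle : K ≤ phi N (t - 1) (m ⟨t - 1, by omega⟩) := by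
          unfold phi
          have hmul := Nat.mul_le_mul_right (N - (t - 1)) (show 1 ≤ t - 1 by omega)
          omega
        exact le_trans hle
          (Finset.le_sup (f := fun j : Fin t => phi N (j : ℕ) (m j))
            (Finset.mem_univ (⟨t - 1, by omega⟩ : Fin t)))
    exact le_trans h (max_le h1 h2)
  have hlower : SUPN ≤ exNum N (starForest t m) := by
    refine Finset.sup_le ?_
    intro i _
    have hmi : m i ≤ m0 := hmono (by rw [Fin.le_def]; exact Nat.zero_le _)
    obtain ⟨G, hGfree, hGcard⟩ := construction_mem m hm hmono i N (by omega)
    rw [exNum]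
    refine le_csSup hbdd ?_
    exact ⟨G, hGfree, hGcard.symm⟩
  exact le_antisymm hupper hlower
end
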